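/- arXiv:1710.08436 — 5 statements merged into one kernel-verified Lean document; each statement's English description precedes it below -/
import Mathlib

section
/- Let A and B be finite nonempty sets contained in a finite universe S, and let (h(s))_{s∈S} be a family of independent random variables each uniformly distributed on [0,1]. Then the probability that the minimum hash values of A and B coincide equals the Jaccard index: P( min_{a∈A} h(a) = min_{b∈B} h(b) ) = |A ∩ B| / |A ∪ B|. -/
/-!
Almost surely the hash values are pairwise distinct, so a single element of `A ∪ B` carries the
least hash on `A ∪ B`, and the two minima agree exactly when that element lies in `A ∩ B`. The
law of the hash vector is a product of identical measures, hence invariant under permutations of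
the coordinates, so each element of `A ∪ B` is this minimizer with the same probability
`1 / |A ∪ B|`.
-/

open MeasureTheory ProbabilityTheory Function Finset

theorem ProbabilityTheory.IndepFun.ae_ne {Ω β : Type*} [MeasurableSpace Ω] [MeasurableSpace β]
    [MeasurableEq β] {μ : Measure Ω} [IsFiniteMeasure μ] {X Y : Ω → β}
    (hXY : IndepFun X Y μ) (hX : AEMeasurable X μ) (hY : AEMeasurable Y μ)
    [NullSingletonClass (μ.map Y)] : ∀ᵐ ω ∂μ, X ω ≠ Y ω := by
  have hdiag : MeasurableSet (Set.diagonal β) := measurableSet_diagonal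
  have hfiber (b : β) : Prod.mk b ⁻¹' Set.diagonal β = {b} := by ext; simp [eq_comm]
  simp only [ae_iff, ne_eq, not_not]
  change μ ((fun ω ↦ (X ω, Y ω)) ⁻¹' Set.diagonal β) = 0
  rw [← Measure.map_apply_of_aemeasurable (hX.prodMk hY) hdiag,
    (indepFun_iff_map_prod_eq_prod_map_map hX hY).1 hXY, Measure.prod_apply hdiag]
  simp [hfiber]

theorem MeasureTheory.Measure.ae_injective_pi {ι β : Type*} [Fintype ι] [MeasurableSpace β]
    [MeasurableEq β] (m : Measure β) [IsProbabilityMeasure m] [NullSingletonClass m] :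
    ∀ᵐ x ∂Measure.pi (fun _ : ι ↦ m), Injective x := by
  have hne (s t : ι) (hst : s ≠ t) : ∀ᵐ x ∂Measure.pi (fun _ : ι ↦ m), x s ≠ x t := by
    have : NullSingletonClass ((Measure.pi fun _ : ι ↦ m).map (fun x ↦ x t)) := by
      rwa [(measurePreserving_eval _ t).map_eq]
    exact ((iIndepFun_pi fun _ ↦ aemeasurable_id).indepFun hst).ae_ne
      (measurable_pi_apply s).aemeasurable (measurable_pi_apply t).aemeasurable
  simpa only [injective_iff_pairwise_ne, Pairwise, onFun, ae_all_iff] using hne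

theorem MeasureTheory.measurePreserving_pi_comp_perm {ι β : Type*} [Fintype ι]
    [MeasurableSpace β] (m : Measure β) [SigmaFinite m] (σ : Equiv.Perm ι) :
    MeasurePreserving (fun x : ι → β ↦ x ∘ σ) (Measure.pi fun _ ↦ m) (Measure.pi fun _ ↦ m) := by
  convert measurePreserving_arrowCongr' (fun _ ↦ m) (fun _ ↦ m) σ.symm (.refl β)
    fun _ ↦ .id m
  ext x
  simp [MeasurableEquiv.arrowCongr', Equiv.arrowCongr']

namespace MinHash

variable {ι α : Type*}

def strictArgmin [LT α] (C : Finset ι) (s : ι) : Set (ι → α) :=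
  {x | ∀ t ∈ C, t ≠ s → x s < x t}

section LinearOrder

variable [LinearOrder α] {C A B : Finset ι} {s : ι} {x : ι → α}

theorem pairwiseDisjoint_strictArgmin (C : Finset ι) :
    (C : Set ι).PairwiseDisjoint (strictArgmin C : ι → Set (ι → α)) :=
  fun s hs t ht hst ↦ Set.disjoint_left.2 fun _ hxs hxt ↦
    (hxs t ht hst.symm).not_gt (hxt s hs hst)

theorem exists_mem_strictArgmin (hx : Injective x) (hC : C.Nonempty) :
    ∃ s ∈ C, x ∈ strictArgmin C s := by
  obtain ⟨s, hs, hmin⟩ := C.exists_mem_eq_inf' hC x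
  exact ⟨s, hs, fun t ht hts ↦ (hmin ▸ C.inf'_le x ht).lt_of_ne (hx.ne hts.symm)⟩

theorem inf'_eq_of_mem_strictArgmin (hAC : A ⊆ C) (hs : s ∈ A) (hx : x ∈ strictArgmin C s)
    (hA : A.Nonempty) : A.inf' hA x = x s :=
  le_antisymm (A.inf'_le x hs) <| A.le_inf' hA x fun t ht ↦ by
    rcases eq_or_ne t s with rfl | hts
    exacts [le_rfl, (hx t (hAC ht) hts).le]

theorem inf'_eq_inf'_iff [DecidableEq ι] (hx : Injective x) (hA : A.Nonempty) (hB : B.Nonempty) :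
    A.inf' hA x = B.inf' hB x ↔ ∃ s ∈ A ∩ B, x ∈ strictArgmin (A ∪ B) s := by
  constructor
  · intro hAB
    obtain ⟨a, ha, hxa⟩ := A.exists_mem_eq_inf' hA x
    obtain ⟨b, hb, hxb⟩ := B.exists_mem_eq_inf' hB x
    obtain rfl : a = b := hx (hxa.symm.trans (hAB.trans hxb))
    refine ⟨a, mem_inter.2 ⟨ha, hb⟩, fun t ht hta ↦ lt_of_le_of_ne ?_ (hx.ne hta.symm)⟩
    rcases mem_union.1 ht with ht | ht
    · exact hxa ▸ A.inf'_le x ht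
    · exact hxb ▸ B.inf'_le x ht
  · rintro ⟨s, hs, hx⟩
    rw [inf'_eq_of_mem_strictArgmin subset_union_left (mem_inter.1 hs).1 hx,
      inf'_eq_of_mem_strictArgmin subset_union_right (mem_inter.1 hs).2 hx]

theorem preimage_comp_swap_strictArgmin [DecidableEq ι] {t : ι} (hs : s ∈ C) (ht : t ∈ C) :
    (fun x : ι → α ↦ x ∘ Equiv.swap s t) ⁻¹' strictArgmin C s = strictArgmin C t := by
  have hmem (u : ι) : Equiv.swap s t u ∈ C ↔ u ∈ C := by
    rw [Equiv.swap_apply_def]; split_ifs <;> simp_all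
  ext x
  simp only [strictArgmin, Set.mem_preimage, Set.mem_ofPred_eq, comp_apply, Equiv.swap_apply_left]
  refine (Equiv.swap s t).forall_congr fun {u} ↦ ?_
  simp [hmem, (Equiv.swap s t).injective.ne_iff' (Equiv.swap_apply_left s t)]

end LinearOrder

section Measure

variable {ν : Measure (ι → ℝ)} {C A B : Finset ι} {s : ι}

theorem measurableSet_strictArgmin (C : Finset ι) (s : ι) :
    MeasurableSet (strictArgmin C s : Set (ι → ℝ)) := by
  simp only [strictArgmin, Set.ofPred_forall]
  exact .biInter C.countable_toSet fun t _ ↦ .iInter fun _ ↦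
    measurableSet_lt (measurable_pi_apply s) (measurable_pi_apply t)

theorem measure_strictArgmin_eq [DecidableEq ι]
    (hexch : ∀ σ : Equiv.Perm ι, MeasurePreserving (fun x : ι → ℝ ↦ x ∘ σ) ν ν) {t : ι}
    (hs : s ∈ C) (ht : t ∈ C) : ν (strictArgmin C s) = ν (strictArgmin C t) := by
  rw [← preimage_comp_swap_strictArgmin hs ht,
    (hexch _).measure_preimage (measurableSet_strictArgmin C s).nullMeasurableSet]

theorem measure_strictArgmin [DecidableEq ι] [IsProbabilityMeasure ν] (hinj : ∀ᵐ x ∂ν, Injective x)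
    (hexch : ∀ σ : Equiv.Perm ι, MeasurePreserving (fun x : ι → ℝ ↦ x ∘ σ) ν ν)
    (hs : s ∈ C) : ν (strictArgmin C s) = (#C : ENNReal)⁻¹ := by
  have hcover : ⋃ t ∈ C, strictArgmin C t =ᵐ[ν] (Set.univ : Set (ι → ℝ)) := by
    refine Filter.eventuallyEq_set.2 ?_
    filter_upwards [hinj] with x hx
    simpa using exists_mem_strictArgmin hx ⟨s, hs⟩
  have hsum : ∑ t ∈ C, ν (strictArgmin C t) = 1 := by
    rw [← measure_biUnion_finset (pairwiseDisjoint_strictArgmin C)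
      fun t _ ↦ measurableSet_strictArgmin C t, measure_congr hcover, measure_univ]
  rw [sum_congr rfl fun t ht ↦ measure_strictArgmin_eq hexch ht hs, sum_const,
    nsmul_eq_mul] at hsum
  exact ENNReal.eq_inv_of_mul_eq_one_left (by rwa [mul_comm])

theorem measure_inf'_eq_inf' [DecidableEq ι] [IsProbabilityMeasure ν] (hinj : ∀ᵐ x ∂ν, Injective x)
    (hexch : ∀ σ : Equiv.Perm ι, MeasurePreserving (fun x : ι → ℝ ↦ x ∘ σ) ν ν)
    (hA : A.Nonempty) (hB : B.Nonempty) :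
    ν {x | A.inf' hA x = B.inf' hB x} = #(A ∩ B) / #(A ∪ B) := by
  have hcollision : {x | A.inf' hA x = B.inf' hB x} =ᵐ[ν] ⋃ s ∈ A ∩ B, strictArgmin (A ∪ B) s := by
    refine Filter.eventuallyEq_set.2 ?_
    filter_upwards [hinj] with x hx
    simpa using inf'_eq_inf'_iff hx hA hB
  rw [measure_congr hcollision, measure_biUnion_finset
    ((pairwiseDisjoint_strictArgmin _).subset (coe_subset.2 inter_subset_union))
    fun s _ ↦ measurableSet_strictArgmin _ s,
    sum_congr rfl fun s hs ↦ measure_strictArgmin hinj hexch (inter_subset_union hs),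
    sum_const, nsmul_eq_mul, div_eq_mul_inv]

end Measure

end MinHash

open MinHash

theorem minhash_collision_eq_jaccard_general
    {Ω ι : Type*} [MeasurableSpace Ω] [Fintype ι] [DecidableEq ι]
    (μ : Measure Ω)
    (h : ι → Ω → ℝ)
    (hmeas : ∀ s, Measurable (h s))
    (hindep : iIndepFun h μ)
    (hunif : ∀ s, Measure.map (h s) μ = volume.restrict (Set.Icc (0 : ℝ) 1))
    (A B : Finset ι) (hA : A.Nonempty) (hB : B.Nonempty) :
    (μ {ω | A.inf' hA (fun a => h a ω) = B.inf' hB (fun b => h b ω)}).toReal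
      = ((A ∩ B).card : ℝ) / ((A ∪ B).card : ℝ) := by
  have : IsProbabilityMeasure (volume.restrict (Set.Icc (0 : ℝ) 1)) := ⟨by simp⟩
  set J : Ω → ι → ℝ := fun ω i ↦ h i ω
  have hJ : μ.map J = Measure.pi fun _ ↦ volume.restrict (Set.Icc (0 : ℝ) 1) := by
    rw [hindep.map_fun_eq_pi_map fun i ↦ (hmeas i).aemeasurable]
    simp only [hunif]
  have hcollision : MeasurableSet {x : ι → ℝ | A.inf' hA x = B.inf' hB x} :=
    measurableSet_eq_fun (Continuous.finset_inf'_apply hA fun i _ ↦ continuous_apply i).measurable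
      (Continuous.finset_inf'_apply hB fun i _ ↦ continuous_apply i).measurable
  change (μ (J ⁻¹' {x | A.inf' hA x = B.inf' hB x})).toReal = _
  rw [← Measure.map_apply (measurable_pi_lambda _ hmeas) hcollision, hJ,
    measure_inf'_eq_inf' (Measure.ae_injective_pi _) (measurePreserving_pi_comp_perm _) hA hB,
    ENNReal.toReal_div, ENNReal.toReal_natCast, ENNReal.toReal_natCast]

/-- **MinHash collision probability equals the Jaccard index.**
For finite nonempty sets `A`, `B` in a finite universe `ι`, and independent
uniform-`[0,1]` hashes `h s`, the probability that the minimum hash values of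
`A` and `B` coincide equals `|A ∩ B| / |A ∪ B|`. -/
theorem minhash_collision_eq_jaccard
    {Ω ι : Type*} [MeasurableSpace Ω] [Fintype ι] [DecidableEq ι]
    (μ : Measure Ω) [IsProbabilityMeasure μ]
    (h : ι → Ω → ℝ)
    (hmeas : ∀ s, Measurable (h s))
    (hindep : iIndepFun h μ)
    (hunif : ∀ s, Measure.map (h s) μ = volume.restrict (Set.Icc (0 : ℝ) 1))
    (A B : Finset ι) (hA : A.Nonempty) (hB : B.Nonempty) :
    (μ {ω | A.inf' hA (fun a => h a ω) = B.inf' hB (fun b => h b ω)}).toReal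
      = ((A ∩ B).card : ℝ) / ((A ∪ B).card : ℝ) :=
  minhash_collision_eq_jaccard_general μ h hmeas hindep hunif A B hA hB
end

section
/- Let n, m ≥ 1 and r ∈ ℕ, set l = 2^r, and let X be the minimum of n independent uniform [0,1] random variables and Y the minimum of m independent uniform [0,1] random variables, with X and Y independent. Let RAY = { (x,y) ∈ [0,1]² : 0 < x ≤ l/(l+1), (l/(l+1))·x ≤ y ≤ ((l+1)/l)·x }. Then P( (X,Y) ∈ RAY ) ≤ ( (2l+1)(l+1)/l³ ) · nm/((n+m)(n+m−1)). -/
open MeasureTheory ProbabilityTheory Set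
open scoped ENNReal

/-! The minimum of `k` independent uniforms has density `k (1 - x)^(k-1)` on `[0, 1]`, and `X`, `Y`
are independent, so the probability is the integral of the product density over
`{0 < x ≤ c, c x ≤ y ≤ x / c}` with `c = l / (l + 1)`. Both densities are decreasing, so on this
wedge each is bounded by its value at `c x`; the `y`-slice has length `(1/c - c) x`, which leaves
`n m (1/c - c) ∫₀^{1/c} x (1 - c x)^(n+m-2) dx = n m (1/c - c) / (c² (n+m-1)(n+m))`,
and `(1/c - c) / c² = (2l+1)(l+1)/l³`. -/

noncomputable def minUniformDensity (k : ℕ) : ℝ → ℝ≥0∞ :=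
  (Icc 0 1).indicator fun x => ENNReal.ofReal (k * (1 - x) ^ (k - 1))

lemma measurable_minUniformDensity (k : ℕ) : Measurable (minUniformDensity k) :=
  (Measurable.ennreal_ofReal (by fun_prop)).indicator measurableSet_Icc

lemma minUniformDensity_le {k : ℕ} {a y : ℝ} (hay : a ≤ y) :
    minUniformDensity k y ≤ ENNReal.ofReal (k * (1 - a) ^ (k - 1)) := by
  by_cases hy : y ∈ Icc (0 : ℝ) 1
  · rw [minUniformDensity, indicator_of_mem hy]
    have : 0 ≤ 1 - y := by linarith [hy.2]
    gcongr
  · simp [minUniformDensity, indicator_of_notMem hy]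

lemma integral_natCast_mul_one_sub_pow {k : ℕ} (hk : k ≠ 0) (a : ℝ) :
    ∫ x in a..1, (k : ℝ) * (1 - x) ^ (k - 1) = (1 - a) ^ k := by
  rw [intervalIntegral.integral_const_mul,
    intervalIntegral.integral_comp_sub_left (fun x => x ^ (k - 1)), integral_pow]
  obtain ⟨j, rfl⟩ := Nat.exists_eq_add_one_of_ne_zero hk
  rw [Nat.add_sub_cancel, sub_self, zero_pow j.succ_ne_zero, sub_zero]
  push_cast
  field_simp

lemma setLIntegral_Icc_natCast_mul_one_sub_pow {k : ℕ} (hk : k ≠ 0) (a : ℝ) :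
    ∫⁻ x in Icc a 1, ENNReal.ofReal (k * (1 - x) ^ (k - 1)) = ENNReal.ofReal (1 - a) ^ k := by
  rcases le_or_gt a 1 with ha | ha
  · rw [← ofReal_integral_eq_lintegral_ofReal, integral_Icc_eq_integral_Ioc,
      ← intervalIntegral.integral_of_le ha, integral_natCast_mul_one_sub_pow hk,
      ENNReal.ofReal_pow (by linarith)]
    · exact (by fun_prop : Continuous fun x : ℝ => (k : ℝ) * (1 - x) ^ (k - 1)).integrableOn_Icc
    · filter_upwards [ae_restrict_mem measurableSet_Icc] with x hx
      have : 0 ≤ 1 - x := by linarith [hx.2]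
      positivity
  · simp [Icc_eq_empty_of_lt ha, ENNReal.ofReal_of_nonpos (by linarith : 1 - a ≤ 0), hk]

lemma withDensity_minUniformDensity_Icc_le (k : ℕ) (a b : ℝ) :
    volume.withDensity (minUniformDensity k) (Icc a b)
      ≤ ENNReal.ofReal (k * (1 - a) ^ (k - 1)) * ENNReal.ofReal (b - a) := by
  rw [withDensity_apply _ measurableSet_Icc, ← Real.volume_Icc, ← setLIntegral_const]
  exact setLIntegral_mono measurable_const fun y hy => minUniformDensity_le hy.1

namespace ProbabilityTheory

variable {Ω : Type*} [MeasurableSpace Ω] {μ : Measure Ω}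

lemma iIndepFun.measure_iInter_preimage_of_uniform {κ : Type*} [Fintype κ] {v : κ → Ω → ℝ}
    (hmeas : ∀ j, Measurable (v j)) (hindep : iIndepFun v μ)
    (hunif : ∀ j, μ.map (v j) = volume.restrict (Icc 0 1)) {A : Set ℝ} (hA : MeasurableSet A) :
    μ (⋂ j, v j ⁻¹' A) = volume (A ∩ Icc 0 1) ^ Fintype.card κ := by
  rw [hindep.meas_iInter fun _ => ⟨A, hA, rfl⟩]
  simp_rw [← Measure.map_apply (hmeas _) hA, hunif, Measure.restrict_apply hA]
  rw [Finset.prod_const, Finset.card_univ]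

theorem iIndepFun.map_iInf_of_uniform {κ : Type*} [Fintype κ] [Nonempty κ] {v : κ → Ω → ℝ}
    (hmeas : ∀ j, Measurable (v j)) (hindep : iIndepFun v μ)
    (hunif : ∀ j, μ.map (v j) = volume.restrict (Icc 0 1)) :
    μ.map (fun ω => ⨅ j, v j ω) = volume.withDensity (minUniformDensity (Fintype.card κ)) := by
  have := hindep.isProbabilityMeasure
  refine Measure.ext_of_Ici _ _ fun t => ?_
  have hpre : (fun ω => ⨅ j, v j ω) ⁻¹' Ici t = ⋂ j, v j ⁻¹' Ici t := by
    ext ω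
    simp [le_ciInf_iff (Set.finite_range _).bddBelow]
  have hinter : Icc (0 : ℝ) 1 ∩ Ici t = Icc (max t 0) 1 := by
    ext x
    simp only [mem_inter_iff, mem_Icc, mem_Ici, max_le_iff]
    tauto
  rw [Measure.map_apply (Measurable.iInf hmeas) measurableSet_Ici, hpre,
    hindep.measure_iInter_preimage_of_uniform hmeas hunif measurableSet_Ici, inter_comm,
    withDensity_apply _ measurableSet_Ici, minUniformDensity,
    setLIntegral_indicator measurableSet_Icc, hinter, Real.volume_Icc,
    setLIntegral_Icc_natCast_mul_one_sub_pow Fintype.card_ne_zero]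

lemma iIndepFun.indepFun_comp_inl_comp_inr {ι κ β γ δ : Type*} [Fintype ι] [Fintype κ]
    [MeasurableSpace β] [MeasurableSpace γ] [MeasurableSpace δ] {u : ι ⊕ κ → Ω → β}
    (hmeas : ∀ s, Measurable (u s)) (hindep : iIndepFun u μ)
    {φ : (ι → β) → γ} {ψ : (κ → β) → δ} (hφ : Measurable φ) (hψ : Measurable ψ) :
    IndepFun (fun ω => φ fun i => u (.inl i) ω) (fun ω => ψ fun j => u (.inr j) ω) μ := by
  let S : Finset (ι ⊕ κ) := Finset.univ.map .inl
  let T : Finset (ι ⊕ κ) := Finset.univ.map .inr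
  have hST : Disjoint S T := by simp [Finset.disjoint_left, S, T]
  exact (hindep.indepFun_finset S T hST hmeas).comp
    (φ := fun w => φ fun i => w ⟨.inl i, by simp [S]⟩)
    (ψ := fun w => ψ fun j => w ⟨.inr j, by simp [T]⟩)
    (hφ.comp (measurable_pi_lambda _ fun _ => measurable_pi_apply _))
    (hψ.comp (measurable_pi_lambda _ fun _ => measurable_pi_apply _))

end ProbabilityTheory

lemma integral_mul_one_sub_mul_pow (k : ℕ) {c : ℝ} (hc : c ≠ 0) :
    ∫ x in (0 : ℝ)..c⁻¹, x * (1 - c * x) ^ k = 1 / (c ^ 2 * ((k + 1) * (k + 2))) := by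
  have hderiv : ∀ x ∈ uIcc 0 c⁻¹, HasDerivAt
      (fun y => -(y / (c * (k + 1))) * (1 - c * y) ^ (k + 1)
        - (1 - c * y) ^ (k + 2) / (c ^ 2 * ((k + 1) * (k + 2))))
      (x * (1 - c * x) ^ k) x := by
    intro x _
    have hlin : HasDerivAt (fun y : ℝ => 1 - c * y) (-c) x := by
      simpa using ((hasDerivAt_id x).const_mul c).const_sub 1
    refine ((((hasDerivAt_id x).div_const (c * (k + 1))).fun_neg.fun_mul
      (hlin.fun_pow (k + 1))).fun_sub
      ((hlin.fun_pow (k + 2)).div_const (c ^ 2 * ((k + 1) * (k + 2))))).congr_deriv ?_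
    simp only [id, Nat.add_sub_cancel, Nat.add_succ_sub_one]
    push_cast
    field_simp
    ring
  rw [intervalIntegral.integral_eq_sub_of_hasDerivAt hderiv
    (Continuous.intervalIntegrable (by fun_prop) _ _)]
  simp [hc]

def wedge (c : ℝ) : Set (ℝ × ℝ) :=
  {p | 0 < p.1 ∧ p.1 ≤ c ∧ c * p.1 ≤ p.2 ∧ p.2 ≤ c⁻¹ * p.1}

lemma measurableSet_wedge (c : ℝ) : MeasurableSet (wedge c) := by
  unfold wedge
  measurability

section Wedge

variable {n m : ℕ} {c : ℝ}

lemma minUniformDensity_mul_wedge_slice_le (hc0 : 0 < c) (hc1 : c ≤ 1) (x : ℝ) :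
    minUniformDensity n x * volume.withDensity (minUniformDensity m) (Prod.mk x ⁻¹' wedge c)
      ≤ (Ioc 0 c⁻¹).indicator
        (fun x => ENNReal.ofReal (n * m * (c⁻¹ - c) * (x * (1 - c * x) ^ (n - 1 + (m - 1))))) x := by
  by_cases hx : x ∈ Ioc 0 c
  · have hslice : Prod.mk x ⁻¹' wedge c ⊆ Icc (c * x) (c⁻¹ * x) :=
      fun _ hy => ⟨hy.2.2.1, hy.2.2.2⟩
    have hcx : c * x ≤ 1 := by nlinarith [hx.2]
    have hcc : c ≤ c⁻¹ := hc1.trans (one_le_inv₀ hc0 |>.mpr hc1)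
    rw [indicator_of_mem (show x ∈ Ioc 0 c⁻¹ from ⟨hx.1, hx.2.trans hcc⟩)]
    calc minUniformDensity n x * volume.withDensity (minUniformDensity m) (Prod.mk x ⁻¹' wedge c)
        ≤ ENNReal.ofReal (n * (1 - c * x) ^ (n - 1))
          * (ENNReal.ofReal (m * (1 - c * x) ^ (m - 1)) * ENNReal.ofReal (c⁻¹ * x - c * x)) := by
          gcongr
          · exact minUniformDensity_le (by nlinarith [hx.1])
          · exact (measure_mono hslice).trans (withDensity_minUniformDensity_Icc_le m _ _)
      _ = _ := by
          rw [← ENNReal.ofReal_mul (by positivity), ← ENNReal.ofReal_mul (by positivity)]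
          congr 1
          ring
  · have hempty : Prod.mk x ⁻¹' wedge c = ∅ :=
      eq_empty_of_forall_notMem fun y hy => hx ⟨hy.1, hy.2.1⟩
    simp [hempty]

theorem prod_withDensity_minUniformDensity_wedge_le (hn : 1 ≤ n) (hm : 1 ≤ m) (hc0 : 0 < c)
    (hc1 : c ≤ 1) :
    (volume.withDensity (minUniformDensity n)).prod (volume.withDensity (minUniformDensity m))
      (wedge c) ≤ ENNReal.ofReal (n * m * (c⁻¹ - c) / (c ^ 2 * ((n + m - 1) * (n + m)))) := by
  have hcc : c ≤ c⁻¹ := hc1.trans (one_le_inv₀ hc0 |>.mpr hc1)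
  have hk : ((n - 1 + (m - 1) : ℕ) : ℝ) = n + m - 2 := by
    push_cast [Nat.cast_sub hn, Nat.cast_sub hm]
    ring
  rw [Measure.prod_apply (measurableSet_wedge c), lintegral_withDensity_eq_lintegral_mul _
    (measurable_minUniformDensity n) (measurable_measure_prodMk_left (measurableSet_wedge c))]
  calc _ ≤ ∫⁻ x, (Ioc 0 c⁻¹).indicator (fun x => ENNReal.ofReal
          (n * m * (c⁻¹ - c) * (x * (1 - c * x) ^ (n - 1 + (m - 1))))) x :=
        lintegral_mono (minUniformDensity_mul_wedge_slice_le hc0 hc1)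
    _ = ENNReal.ofReal (∫ x in 0..c⁻¹,
          n * m * (c⁻¹ - c) * (x * (1 - c * x) ^ (n - 1 + (m - 1)))) := by
        rw [lintegral_indicator measurableSet_Ioc, intervalIntegral.integral_of_le (by positivity),
          ofReal_integral_eq_lintegral_ofReal]
        · exact (Continuous.integrableOn_Icc (by fun_prop)).mono_set Ioc_subset_Icc_self
        · filter_upwards [ae_restrict_mem measurableSet_Ioc] with x hx
          have : c * x ≤ 1 := (le_inv_mul_iff₀ hc0).mp (by rw [mul_one]; exact hx.2)
          have : 0 ≤ c⁻¹ - c := by linarith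
          have := hx.1.le
          positivity
    _ = _ := by
        rw [intervalIntegral.integral_const_mul, integral_mul_one_sub_mul_pow _ hc0.ne', hk]
        congr 1
        ring

end Wedge

theorem hyperminhash_ray_mass_sharp_general
    {Ω : Type*} [MeasurableSpace Ω] (μ : Measure Ω)
    (r : ℕ) (n m : ℕ) (hn : 1 ≤ n) (hm : 1 ≤ m)
    (u : Fin n ⊕ Fin m → Ω → ℝ)
    (hmeas : ∀ s, Measurable (u s))
    (hindep : iIndepFun u μ)
    (hunif : ∀ s, Measure.map (u s) μ = volume.restrict (Set.Icc (0 : ℝ) 1))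
    (X Y : Ω → ℝ)
    (hX : X = fun ω => ⨅ i : Fin n, u (Sum.inl i) ω)
    (hY : Y = fun ω => ⨅ j : Fin m, u (Sum.inr j) ω)
    (l : ℝ) (hl : l = 2 ^ r)
    (RAY : Set (ℝ × ℝ))
    (hRAY : RAY = {xy : ℝ × ℝ | xy.1 ∈ Set.Icc (0 : ℝ) 1 ∧ xy.2 ∈ Set.Icc (0 : ℝ) 1
      ∧ 0 < xy.1 ∧ xy.1 ≤ l / (l + 1)
      ∧ l / (l + 1) * xy.1 ≤ xy.2 ∧ xy.2 ≤ (l + 1) / l * xy.1}) :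
    (μ {ω | (X ω, Y ω) ∈ RAY}).toReal
      ≤ (2 * l + 1) * (l + 1) / l ^ 3
          * ((n : ℝ) * m / (((n : ℝ) + m) * ((n : ℝ) + m - 1))) := by
  have := hindep.isProbabilityMeasure
  have : Nonempty (Fin n) := ⟨⟨0, hn⟩⟩
  have : Nonempty (Fin m) := ⟨⟨0, hm⟩⟩
  have hl0 : 0 < l := hl ▸ by positivity
  set c := l / (l + 1) with hc
  have hXm : Measurable X := hX ▸ Measurable.iInf fun _ => hmeas _
  have hYm : Measurable Y := hY ▸ Measurable.iInf fun _ => hmeas _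
  have hlawX : μ.map X = volume.withDensity (minUniformDensity n) := by
    simpa [hX] using (hindep.precomp Sum.inl_injective).map_iInf_of_uniform (fun _ => hmeas _)
      (fun _ => hunif _)
  have hlawY : μ.map Y = volume.withDensity (minUniformDensity m) := by
    simpa [hY] using (hindep.precomp Sum.inr_injective).map_iInf_of_uniform (fun _ => hmeas _)
      (fun _ => hunif _)
  have hXY : IndepFun X Y μ := hX ▸ hY ▸ hindep.indepFun_comp_inl_comp_inr hmeas
    (Measurable.iInf measurable_pi_apply) (Measurable.iInf measurable_pi_apply)
  have hRAY_sub : RAY ⊆ wedge c := by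
    rw [hRAY]
    rintro ⟨x, y⟩ ⟨-, -, hx0, hxc, hlo, hhi⟩
    exact ⟨hx0, hxc, hlo, by rwa [hc, inv_div]⟩
  have hbound : μ {ω | (X ω, Y ω) ∈ RAY}
      ≤ ENNReal.ofReal (n * m * (c⁻¹ - c) / (c ^ 2 * ((n + m - 1) * (n + m)))) :=
    calc μ {ω | (X ω, Y ω) ∈ RAY} ≤ μ.map (fun ω => (X ω, Y ω)) (wedge c) := by
          rw [Measure.map_apply (hXm.prodMk hYm) (measurableSet_wedge c)]
          exact measure_mono fun _ hω => hRAY_sub hω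
      _ = (μ.map X).prod (μ.map Y) (wedge c) := by
          rw [(indepFun_iff_map_prod_eq_prod_map_map hXm.aemeasurable hYm.aemeasurable).mp hXY]
      _ ≤ _ := hlawX ▸ hlawY ▸ prod_withDensity_minUniformDensity_wedge_le hn hm (by positivity)
          (div_le_one_of_le₀ (by linarith) (by positivity))
  have hnm : (1 : ℝ) ≤ n + m - 1 := by
    have : (1 : ℝ) ≤ n := by exact_mod_cast hn
    have : (1 : ℝ) ≤ m := by exact_mod_cast hm
    linarith
  refine ENNReal.toReal_le_of_le_ofReal (by positivity) (hbound.trans_eq ?_)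
  rw [hc]
  congr 1
  field_simp
  ring

/-- **Probability mass of the ray from the origin** (Lemma `thm:ray`, sharp form):
with `l = 2^r` and `RAY = {(x,y) ∈ [0,1]² : 0 < x ≤ l/(l+1), (l/(l+1))x ≤ y ≤ ((l+1)/l)x}`,
`P((X,Y) ∈ RAY) ≤ ((2l+1)(l+1)/l³) · nm/((n+m)(n+m−1))`. -/
theorem hyperminhash_ray_mass_sharp
    {Ω : Type*} [MeasurableSpace Ω] (μ : Measure Ω) [IsProbabilityMeasure μ]
    (r : ℕ) (n m : ℕ) (hn : 1 ≤ n) (hm : 1 ≤ m)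
    (u : Fin n ⊕ Fin m → Ω → ℝ)
    (hmeas : ∀ s, Measurable (u s))
    (hindep : iIndepFun u μ)
    (hunif : ∀ s, Measure.map (u s) μ = volume.restrict (Set.Icc (0 : ℝ) 1))
    (X Y : Ω → ℝ)
    (hX : X = fun ω => ⨅ i : Fin n, u (Sum.inl i) ω)
    (hY : Y = fun ω => ⨅ j : Fin m, u (Sum.inr j) ω)
    (l : ℝ) (hl : l = 2 ^ r)
    (RAY : Set (ℝ × ℝ))
    (hRAY : RAY = {xy : ℝ × ℝ | xy.1 ∈ Set.Icc (0 : ℝ) 1 ∧ xy.2 ∈ Set.Icc (0 : ℝ) 1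
      ∧ 0 < xy.1 ∧ xy.1 ≤ l / (l + 1)
      ∧ l / (l + 1) * xy.1 ≤ xy.2 ∧ xy.2 ≤ (l + 1) / l * xy.1}) :
    (μ {ω | (X ω, Y ω) ∈ RAY}).toReal
      ≤ (2 * l + 1) * (l + 1) / l ^ 3
          * ((n : ℝ) * m / (((n : ℝ) + m) * ((n : ℝ) + m - 1))) :=
  hyperminhash_ray_mass_sharp_general μ r n m hn hm u hmeas hindep hunif X Y hX hY l hl RAY hRAY
end

section
/- Let n, m ≥ 1 and r ∈ ℕ, set l = 2^r, and let X be the minimum of n independent uniform [0,1] random variables and Y the minimum of m independent uniform [0,1] random variables, with X and Y independent. Let RAY = { (x,y) ∈ [0,1]² : 0 < x ≤ l/(l+1), (l/(l+1))·x ≤ y ≤ ((l+1)/l)·x }. Then P( (X,Y) ∈ RAY ) ≤ 3/2^r. -/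
/-!
Condition on `X = x`. Only `x ∈ [0, 1]` contributes, and then `Y` must lie in the slice
`[c x, min (x / c) 1]` of the cone, where `c = l / (l + 1)`. As `Y` is the minimum of `m` independent
uniforms, `P(Y ∈ [a, b]) = (1 - a)^m - (1 - b)^m ≤ m (1 - a)^(m-1) (b - a)`, so the slice has
probability at most `m (c x) (1 - c x)^(m-1) (c⁻² - 1) ≤ c⁻² - 1 = (2l + 1) / l² ≤ 3 / l`, uniformly
in `x`. Independence of `X` and `Y` lets us integrate this bound against the law of `X`.
-/

open MeasureTheory ProbabilityTheory Set

lemma natCast_mul_mul_one_sub_pow_le_one (k : ℕ) {t : ℝ} (h0 : 0 ≤ t) (h1 : t ≤ 1) :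
    k * t * (1 - t) ^ (k - 1) ≤ 1 := by
  rcases Nat.eq_zero_or_pos k with rfl | hk
  · simp
  have h1t : 0 ≤ 1 - t := by linarith
  -- the `j = 1` term of the binomial expansion of `(t + (1 - t)) ^ k = 1`
  calc (k : ℝ) * t * (1 - t) ^ (k - 1) = t ^ 1 * (1 - t) ^ (k - 1) * k.choose 1 := by
        rw [Nat.choose_one_right]; ring
    _ ≤ ∑ j ∈ Finset.range (k + 1), t ^ j * (1 - t) ^ (k - j) * k.choose j :=
        Finset.single_le_sum (f := fun j => t ^ j * (1 - t) ^ (k - j) * k.choose j)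
          (fun j _ => by positivity) (Finset.mem_range.2 (by omega))
    _ = 1 := by rw [← add_pow, add_sub_cancel, one_pow]

lemma pow_sub_pow_le_natCast_mul {p q : ℝ} (hq : 0 ≤ q) (hqp : q ≤ p) (k : ℕ) :
    p ^ k - q ^ k ≤ k * p ^ (k - 1) * (p - q) := by
  have := abs_pow_sub_pow_le p q k
  rw [abs_of_nonneg (sub_nonneg.2 (pow_le_pow_left₀ hq hqp k)), abs_of_nonneg (sub_nonneg.2 hqp),
    abs_of_nonneg (hq.trans hqp), abs_of_nonneg hq, max_eq_left hqp] at this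
  linarith

lemma natCast_mul_one_sub_pow_mul_sub_le (k : ℕ) {c x : ℝ} (hc0 : 0 < c) (hc1 : c ≤ 1)
    (hx0 : 0 ≤ x) (hcx : c * x ≤ 1) :
    k * (1 - c * x) ^ (k - 1) * (c⁻¹ * x - c * x) ≤ c⁻¹ ^ 2 - 1 := by
  have hfac : 0 ≤ c⁻¹ ^ 2 - 1 := by
    rw [sub_nonneg]; exact one_le_pow₀ (one_le_inv_iff₀.2 ⟨hc0, hc1⟩)
  calc (k : ℝ) * (1 - c * x) ^ (k - 1) * (c⁻¹ * x - c * x)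
      = k * (c * x) * (1 - c * x) ^ (k - 1) * (c⁻¹ ^ 2 - 1) := by field_simp
    _ ≤ 1 * (c⁻¹ ^ 2 - 1) := by
        gcongr; exact natCast_mul_mul_one_sub_pow_le_one k (by positivity) hcx
    _ = c⁻¹ ^ 2 - 1 := one_mul _

lemma add_one_div_sq_sub_one_le {l : ℝ} (hl : 1 ≤ l) : ((l + 1) / l) ^ 2 - 1 ≤ 3 / l := by
  rw [div_pow, div_sub_one (by positivity), div_le_div_iff₀ (by positivity) (by positivity)]
  nlinarith

namespace ProbabilityTheory

variable {Ω : Type*} [MeasurableSpace Ω] {μ : Measure Ω}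

section Uniform

variable {f : Ω → ℝ} (hf : Measurable f) (hunif : μ.map f = volume.restrict (Icc 0 1))
include hf hunif

lemma measure_le_of_map_eq_uniform {t : ℝ} (ht : 0 ≤ t) :
    μ {ω | t ≤ f ω} = ENNReal.ofReal (1 - t) := by
  change μ (f ⁻¹' Ici t) = _
  rw [← Measure.map_apply hf measurableSet_Ici, hunif, Measure.restrict_apply measurableSet_Ici,
    show Ici t ∩ Icc 0 1 = Icc t 1 by grind, Real.volume_Icc]

lemma measure_lt_of_map_eq_uniform {t : ℝ} (ht : 0 ≤ t) :
    μ {ω | t < f ω} = ENNReal.ofReal (1 - t) := by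
  change μ (f ⁻¹' Ioi t) = _
  rw [← Measure.map_apply hf measurableSet_Ioi, hunif, Measure.restrict_apply measurableSet_Ioi,
    show Ioi t ∩ Icc 0 1 = Ioc t 1 by grind, Real.volume_Ioc]

end Uniform

lemma IndepFun.measure_prodMk_mem_le [IsProbabilityMeasure μ] {α β : Type*} [MeasurableSpace α]
    [MeasurableSpace β] {X : Ω → α} {Y : Ω → β} (h : IndepFun X Y μ) (hX : Measurable X)
    (hY : Measurable Y) {S : Set (α × β)} (hS : MeasurableSet S) {C : ENNReal}
    (hC : ∀ x, μ (Y ⁻¹' (Prod.mk x ⁻¹' S)) ≤ C) :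
    μ {ω | (X ω, Y ω) ∈ S} ≤ C := by
  have : IsProbabilityMeasure (μ.map X) := Measure.isProbabilityMeasure_map hX.aemeasurable
  calc μ {ω | (X ω, Y ω) ∈ S} = ((μ.map X).prod (μ.map Y)) S := by
        rw [← (indepFun_iff_map_prod_eq_prod_map_map hX.aemeasurable hY.aemeasurable).1 h,
          Measure.map_apply (hX.prodMk hY) hS]
        rfl
    _ = ∫⁻ x, μ (Y ⁻¹' (Prod.mk x ⁻¹' S)) ∂(μ.map X) := by
        simp only [Measure.prod_apply hS, Measure.map_apply hY (measurable_prodMk_left hS)]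
    _ ≤ ∫⁻ _, C ∂(μ.map X) := lintegral_mono hC
    _ = C := by simp

variable {ι : Type*} [Fintype ι]

lemma iIndepFun.indepFun_inl_inr {κ β : Type*} [Fintype κ] [MeasurableSpace β]
    {u : ι ⊕ κ → Ω → β} (h : iIndepFun u μ) (hu : ∀ s, Measurable (u s)) :
    IndepFun (fun ω i => u (.inl i) ω) (fun ω j => u (.inr j) ω) μ :=
  (h.indepFun_finset _ _ (Finset.disjoint_map_inl_map_inr Finset.univ Finset.univ) hu).comp
    (φ := fun w i => w ⟨.inl i, Finset.mem_map_of_mem _ (Finset.mem_univ i)⟩)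
    (ψ := fun w j => w ⟨.inr j, Finset.mem_map_of_mem _ (Finset.mem_univ j)⟩)
    (measurable_pi_lambda _ fun _ => measurable_pi_apply _)
    (measurable_pi_lambda _ fun _ => measurable_pi_apply _)

variable [Nonempty ι] {v : ι → Ω → ℝ}

lemma iIndepFun.measure_le_iInf (h : iIndepFun v μ) (t : ℝ) :
    μ {ω | t ≤ ⨅ i, v i ω} = ∏ i, μ {ω | t ≤ v i ω} := by
  have hset : {ω | t ≤ ⨅ i, v i ω} = ⋂ i, {ω | t ≤ v i ω} := by
    ext ω; simp [le_ciInf_iff (Finite.bddBelow_range _)]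
  rw [hset]
  exact h.meas_iInter fun i => ⟨Ici t, measurableSet_Ici, rfl⟩

lemma iIndepFun.measure_lt_iInf (h : iIndepFun v μ) (t : ℝ) :
    μ {ω | t < ⨅ i, v i ω} = ∏ i, μ {ω | t < v i ω} := by
  have hset : {ω | t < ⨅ i, v i ω} = ⋂ i, {ω | t < v i ω} := by
    ext ω
    obtain ⟨j, hj⟩ := exists_eq_ciInf_of_finite (f := fun i => v i ω)
    simp only [mem_ofPred_eq, mem_iInter, ← hj]
    exact ⟨fun ht i => ht.trans_le (hj ▸ ciInf_le (Finite.bddBelow_range _) i), fun ht => ht j⟩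
  rw [hset]
  exact h.meas_iInter fun i => ⟨Ioi t, measurableSet_Ioi, rfl⟩

variable (h : iIndepFun v μ) (hv : ∀ i, Measurable (v i))
  (hunif : ∀ i, μ.map (v i) = volume.restrict (Icc 0 1))
include h hv hunif

lemma iIndepFun.measure_iInf_mem_Icc {a b : ℝ} (ha : 0 ≤ a) (hab : a ≤ b) (hb : b ≤ 1) :
    μ {ω | ⨅ i, v i ω ∈ Icc a b} =
      ENNReal.ofReal ((1 - a) ^ Fintype.card ι - (1 - b) ^ Fintype.card ι) := by
  have hle : μ {ω | a ≤ ⨅ i, v i ω} = ENNReal.ofReal ((1 - a) ^ Fintype.card ι) := by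
    rw [h.measure_le_iInf, Finset.prod_congr rfl fun i _ =>
      measure_le_of_map_eq_uniform (hv i) (hunif i) ha, Finset.prod_const, Finset.card_univ,
      ENNReal.ofReal_pow (by linarith)]
  have hlt : μ {ω | b < ⨅ i, v i ω} = ENNReal.ofReal ((1 - b) ^ Fintype.card ι) := by
    rw [h.measure_lt_iInf, Finset.prod_congr rfl fun i _ =>
      measure_lt_of_map_eq_uniform (hv i) (hunif i) (ha.trans hab), Finset.prod_const,
      Finset.card_univ, ENNReal.ofReal_pow (by linarith)]
  have hset : {ω | ⨅ i, v i ω ∈ Icc a b} = {ω | a ≤ ⨅ i, v i ω} \ {ω | b < ⨅ i, v i ω} := by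
    ext ω; simp
  have hsub : {ω | b < ⨅ i, v i ω} ⊆ {ω | a ≤ ⨅ i, v i ω} := fun ω hω => hab.trans (le_of_lt hω)
  rw [hset, measure_sdiff hsub (measurableSet_lt measurable_const (.iInf hv)).nullMeasurableSet
      (hlt ▸ ENNReal.ofReal_ne_top), hle, hlt, ENNReal.ofReal_sub _ (pow_nonneg (by linarith) _)]

lemma iIndepFun.measure_iInf_mem_cone_slice_le {c x : ℝ} (hc0 : 0 < c) (hc1 : c ≤ 1)
    (hx0 : 0 ≤ x) (hx1 : x ≤ 1) :
    μ {ω | ⨅ i, v i ω ∈ Icc (c * x) (min (c⁻¹ * x) 1)} ≤ ENNReal.ofReal (c⁻¹ ^ 2 - 1) := by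
  have hcx : c * x ≤ 1 := by nlinarith
  have hcc : c ≤ c⁻¹ := hc1.trans (one_le_inv_iff₀.2 ⟨hc0, hc1⟩)
  have hlow : c * x ≤ min (c⁻¹ * x) 1 := le_min (by gcongr) hcx
  rw [h.measure_iInf_mem_Icc hv hunif (by positivity) hlow (min_le_right _ _)]
  refine ENNReal.ofReal_le_ofReal ?_
  set k := Fintype.card ι
  calc (1 - c * x) ^ k - (1 - min (c⁻¹ * x) 1) ^ k
      ≤ k * (1 - c * x) ^ (k - 1) * (min (c⁻¹ * x) 1 - c * x) :=
        (pow_sub_pow_le_natCast_mul (by linarith [min_le_right (c⁻¹ * x) 1]) (by linarith) k).trans_eq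
          (by ring)
    _ ≤ k * (1 - c * x) ^ (k - 1) * (c⁻¹ * x - c * x) := by
        gcongr
        exact min_le_left _ _
    _ ≤ c⁻¹ ^ 2 - 1 := natCast_mul_one_sub_pow_mul_sub_le k hc0 hc1 hx0 hcx

end ProbabilityTheory

theorem hyperminhash_ray_mass_general
    {Ω : Type*} [MeasurableSpace Ω] (μ : Measure Ω) [IsProbabilityMeasure μ]
    (r : ℕ) (n m : ℕ) (hm : 1 ≤ m)
    (u : Fin n ⊕ Fin m → Ω → ℝ)
    (hmeas : ∀ s, Measurable (u s))
    (hindep : iIndepFun u μ)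
    (hunif : ∀ s, Measure.map (u s) μ = volume.restrict (Set.Icc (0 : ℝ) 1))
    (X Y : Ω → ℝ)
    (hX : X = fun ω => ⨅ i : Fin n, u (Sum.inl i) ω)
    (hY : Y = fun ω => ⨅ j : Fin m, u (Sum.inr j) ω)
    (l : ℝ) (hl : l = 2 ^ r)
    (RAY : Set (ℝ × ℝ))
    (hRAY : RAY = {xy : ℝ × ℝ | xy.1 ∈ Set.Icc (0 : ℝ) 1 ∧ xy.2 ∈ Set.Icc (0 : ℝ) 1
      ∧ 0 < xy.1 ∧ xy.1 ≤ l / (l + 1)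
      ∧ l / (l + 1) * xy.1 ≤ xy.2 ∧ xy.2 ≤ (l + 1) / l * xy.1}) :
    (μ {ω | (X ω, Y ω) ∈ RAY}).toReal ≤ 3 / 2 ^ r := by
  have : Nonempty (Fin m) := ⟨⟨0, hm⟩⟩
  have hRAYmeas : MeasurableSet RAY := by rw [hRAY]; measurability
  have hXY : IndepFun X Y μ := hX ▸ hY ▸ (hindep.indepFun_inl_inr hmeas).comp
    (.iInf fun i => measurable_pi_apply i) (.iInf fun j => measurable_pi_apply j)
  subst hX hY hl hRAY
  set c : ℝ := 2 ^ r / (2 ^ r + 1)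
  have hl : (1 : ℝ) ≤ 2 ^ r := one_le_pow₀ one_le_two
  have hc0 : 0 < c := by positivity
  have hc1 : c ≤ 1 := div_le_one_of_le₀ (by linarith) (by positivity)
  have hcinv : (2 ^ r + 1) / 2 ^ r = c⁻¹ := (inv_div _ _).symm
  have hcone : c⁻¹ ^ 2 - 1 ≤ 3 / 2 ^ r := hcinv ▸ add_one_div_sq_sub_one_le hl
  refine ENNReal.toReal_le_of_le_ofReal (by positivity) <| hXY.measure_prodMk_mem_le
    (.iInf fun i => hmeas _) (.iInf fun j => hmeas _) hRAYmeas fun x => ?_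
  by_cases hx : x ∈ Icc 0 1
  · calc _ ≤ μ {ω | ⨅ j, u (.inr j) ω ∈ Icc (c * x) (min (c⁻¹ * x) 1)} := by
          refine measure_mono fun ω ⟨_, ⟨_, hy1⟩, _, _, hlow, hupp⟩ => ⟨hlow, le_min ?_ hy1⟩
          rwa [← hcinv]
      _ ≤ ENNReal.ofReal (c⁻¹ ^ 2 - 1) :=
          (hindep.precomp Sum.inr_injective).measure_iInf_mem_cone_slice_le (fun _ => hmeas _)
            (fun _ => hunif _) hc0 hc1 hx.1 hx.2
      _ ≤ ENNReal.ofReal (3 / 2 ^ r) := ENNReal.ofReal_le_ofReal hcone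
  · exact le_of_eq_of_le (measure_mono_null (fun ω hω => hx hω.1) measure_empty) bot_le

/-- **Probability mass of the ray from the origin** (Lemma `thm:ray`):
with `l = 2^r` and `RAY = {(x,y) ∈ [0,1]² : 0 < x ≤ l/(l+1), (l/(l+1))x ≤ y ≤ ((l+1)/l)x}`,
`P((X,Y) ∈ RAY) ≤ 3/2^r`. -/
theorem hyperminhash_ray_mass
    {Ω : Type*} [MeasurableSpace Ω] (μ : Measure Ω) [IsProbabilityMeasure μ]
    (r : ℕ) (n m : ℕ) (hn : 1 ≤ n) (hm : 1 ≤ m)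
    (u : Fin n ⊕ Fin m → Ω → ℝ)
    (hmeas : ∀ s, Measurable (u s))
    (hindep : iIndepFun u μ)
    (hunif : ∀ s, Measure.map (u s) μ = volume.restrict (Set.Icc (0 : ℝ) 1))
    (X Y : Ω → ℝ)
    (hX : X = fun ω => ⨅ i : Fin n, u (Sum.inl i) ω)
    (hY : Y = fun ω => ⨅ j : Fin m, u (Sum.inr j) ω)
    (l : ℝ) (hl : l = 2 ^ r)
    (RAY : Set (ℝ × ℝ))
    (hRAY : RAY = {xy : ℝ × ℝ | xy.1 ∈ Set.Icc (0 : ℝ) 1 ∧ xy.2 ∈ Set.Icc (0 : ℝ) 1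
      ∧ 0 < xy.1 ∧ xy.1 ≤ l / (l + 1)
      ∧ l / (l + 1) * xy.1 ≤ xy.2 ∧ xy.2 ≤ (l + 1) / l * xy.1}) :
    (μ {ω | (X ω, Y ω) ∈ RAY}).toReal ≤ 3 / 2 ^ r :=
  hyperminhash_ray_mass_general μ r n m hm u hmeas hindep hunif X Y hX hY l hl RAY hRAY
end

section
/- Let n, m, q, r ∈ ℕ with 1 ≤ m ≤ n ≤ 2^{2^q + r}. Define ρ_q(x) = min(⌊−log₂ x⌋ + 1, 2^q) for x ∈ (0,1], σ_r(x) = ⌊x·2^r⌋, and ĥ_{q,r}(x) = ( ρ_q(x), σ_r( x·2^{ρ_q(x)} − 1 ) ). Let X be the minimum of n independent uniform [0,1] random variables and Y the minimum of m independent uniform [0,1] random variables, with X and Y independent. Then the single-bucket collision probability satisfies P( ĥ_{q,r}(X) = ĥ_{q,r}(Y) ) ≤ 6/2^r + n/2^{2^q + r}. -/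
open MeasureTheory ProbabilityTheory

/-- `ρ_q(x) = min(⌊−log₂ x⌋ + 1, 2^q)`, the truncated position of the leading 1 bit. -/
noncomputable def rhoHMH (q : ℕ) (x : ℝ) : ℤ :=
  min (⌊-Real.logb 2 x⌋ + 1) (2 ^ q)

/-- `σ_r(x) = ⌊x·2^r⌋`, the next `r` bits. -/
noncomputable def sigmaHMH (r : ℕ) (x : ℝ) : ℤ :=
  ⌊x * 2 ^ r⌋

/-- The HyperMinHash bucket encoding `ĥ_{q,r}(x) = (ρ_q(x), σ_r(x·2^{ρ_q(x)} − 1))`. -/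
noncomputable def hatHMH (q r : ℕ) (x : ℝ) : ℤ × ℤ :=
  (rhoHMH q x, sigmaHMH r (x * (2 : ℝ) ^ rhoHMH q x - 1))

/-!
Independence of `X` and `Y` turns the collision probability into
`∑_b P(ĥ(X) = b) P(ĥ(Y) = b)`. The bucket `b = (k, j)` is an interval of length `2^{-k-r}`,
so a union bound over the `m` uniforms gives `P(ĥ(Y) = b) ≤ m 2^{-k-r}`. Summing `P(ĥ(X) = b)`
over `j` leaves `P(ρ(X) = k)`, which is at most `P(X > 2^{-k}) ≤ (1 - 2^{-k})^m` below the
truncation level and at most `1` at the level `k = 2^q`. The remaining sum over `k` is at most `6`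
because `m x (1 - x)^m ≤ min(m x, 2 / (m x))` and the points `x = 2^{-k}` are geometric.
-/

open Finset
open scoped ENNReal

lemma inv_two_pow_mem_Icc (k : ℕ) : ((2 : ℝ) ^ k)⁻¹ ∈ Set.Icc 0 1 :=
  ⟨by positivity, inv_le_one_of_one_le₀ (one_le_pow₀ one_le_two)⟩

lemma mul_mul_one_sub_pow_le_two_div {x : ℝ} (hx0 : 0 ≤ x) (hx1 : x ≤ 1) (m : ℕ) :
    m * x * (1 - x) ^ m ≤ 2 / (m * x) := by
  have hexp : (1 - x) ^ m ≤ Real.exp (-(m * x)) := calc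
    (1 - x) ^ m ≤ Real.exp (-x) ^ m :=
      pow_le_pow_left₀ (by linarith) (by linarith [Real.add_one_le_exp (-x)]) m
    _ = Real.exp (-(m * x)) := by rw [← Real.exp_nat_mul, mul_neg]
  rcases (by positivity : (0 : ℝ) ≤ m * x).eq_or_lt with h0 | hpos
  · simp [← h0]
  have hquad := Real.quadratic_le_exp_of_nonneg hpos.le
  have hinv : Real.exp (-(m * x)) * Real.exp (m * x) = 1 := by rw [← Real.exp_add]; simp
  rw [le_div_iff₀ hpos]
  nlinarith [mul_le_mul_of_nonneg_left hexp (sq_nonneg (m * x)), Real.exp_pos (-(m * x))]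

lemma sum_range_mul_inv_two_pow_mul_one_sub_pow_le (m N : ℕ) :
    ∑ k ∈ range N, (m : ℝ) * (2 ^ k)⁻¹ * (1 - (2 ^ k)⁻¹) ^ m ≤ 6 := by
  rcases Nat.eq_zero_or_pos m with rfl | hm
  · simp
  set f : ℕ → ℝ := fun k => (m : ℝ) * (2 ^ k)⁻¹ * (1 - (2 ^ k)⁻¹) ^ m
  set k₀ := Nat.log 2 m
  have hm₀ : (0 : ℝ) < m := by exact_mod_cast hm
  have hlow : (2 : ℝ) ^ k₀ ≤ m := by exact_mod_cast Nat.pow_log_le_self 2 hm.ne'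
  have hhigh : (m : ℝ) < 2 ^ (k₀ + 1) := by
    exact_mod_cast Nat.lt_pow_succ_log_self one_lt_two m
  have hf_nonneg (k : ℕ) : 0 ≤ f k := by
    have := (inv_two_pow_mem_Icc k).2
    exact mul_nonneg (by positivity) (pow_nonneg (by linarith) m)
  have hf_small (k : ℕ) : f k ≤ 2 * 2 ^ k / m := by
    have := mul_mul_one_sub_pow_le_two_div (inv_two_pow_mem_Icc k).1 (inv_two_pow_mem_Icc k).2 m
    rwa [div_mul_eq_div_div, div_inv_eq_mul, div_mul_eq_mul_div] at this
  have hf_large (k : ℕ) : f k ≤ m * (2⁻¹ : ℝ) ^ k := by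
    obtain ⟨h0, h1⟩ := inv_two_pow_mem_Icc k
    rw [inv_pow]
    exact mul_le_of_le_one_right (by positivity) (pow_le_one₀ (by linarith) (by linarith))
  set M := max N k₀
  calc ∑ k ∈ range N, f k ≤ ∑ k ∈ range M, f k :=
        sum_le_sum_of_subset_of_nonneg (range_subset_range.2 (le_max_left _ _))
          fun k _ _ => hf_nonneg k
    _ = ∑ k ∈ range k₀, f k + ∑ k ∈ Ico k₀ M, f k :=
        (sum_range_add_sum_Ico _ (le_max_right _ _)).symm
    _ ≤ ∑ k ∈ range k₀, (2 : ℝ) * 2 ^ k / m + ∑ k ∈ Ico k₀ M, (m : ℝ) * 2⁻¹ ^ k :=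
        add_le_add (sum_le_sum fun k _ => hf_small k) (sum_le_sum fun k _ => hf_large k)
    _ ≤ 2 + 4 := by
        gcongr
        · rw [← sum_div, ← mul_sum, geom_sum_eq (by norm_num : (2 : ℝ) ≠ 1),
            div_le_iff₀ hm₀]
          linarith
        · rw [← mul_sum]
          calc (m : ℝ) * ∑ k ∈ Ico k₀ M, (2⁻¹ : ℝ) ^ k ≤ m * ((2⁻¹) ^ k₀ / (1 - 2⁻¹)) :=
                mul_le_mul_of_nonneg_left
                  (geom_sum_Ico_le_of_lt_one (by norm_num) (by norm_num)) hm₀.le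
            _ = 2 * m / 2 ^ k₀ := by rw [inv_pow]; field_simp; norm_num
            _ ≤ 4 := by rw [div_le_iff₀ (by positivity)]; rw [pow_succ] at hhigh; linarith
    _ = 6 := by norm_num

lemma rhoHMH_le (q : ℕ) (x : ℝ) : rhoHMH q x ≤ 2 ^ q := min_le_right _ _

lemma inv_two_zpow_lt_of_rhoHMH_eq {q : ℕ} {x : ℝ} {k : ℤ} (hx : 0 < x) (hk : k < 2 ^ q)
    (h : rhoHMH q x = k) : ((2 : ℝ) ^ k)⁻¹ < x := by
  have hfloor : ⌊-Real.logb 2 x⌋ + 1 = k := by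
    rw [rhoHMH] at h
    omega
  have hlog : ((-k : ℤ) : ℝ) < Real.logb 2 x := by
    have := Int.lt_floor_add_one (-Real.logb 2 x)
    rw [← Int.cast_one, ← Int.cast_add, hfloor] at this
    push_cast
    linarith
  rwa [Real.lt_logb_iff_rpow_lt one_lt_two hx, Real.rpow_intCast, zpow_neg] at hlog

lemma mem_Ico_of_hatHMH_eq {q r : ℕ} {x : ℝ} {k j : ℤ} (h : hatHMH q r x = (k, j)) :
    x ∈ Set.Ico ((1 + j / 2 ^ r) * ((2 : ℝ) ^ k)⁻¹)
      ((1 + (j + 1) / 2 ^ r) * ((2 : ℝ) ^ k)⁻¹) := by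
  simp only [hatHMH, sigmaHMH, Prod.mk.injEq] at h
  obtain ⟨hk, hj⟩ := h
  rw [hk, Int.floor_eq_iff] at hj
  have h2r : (0 : ℝ) < 2 ^ r := by positivity
  have hx : x = x * 2 ^ k * ((2 : ℝ) ^ k)⁻¹ :=
    (mul_inv_cancel_right₀ (zpow_ne_zero k two_ne_zero) x).symm
  rw [hx]
  constructor
  · refine mul_le_mul_of_nonneg_right ?_ (inv_nonneg.2 (zpow_nonneg zero_le_two _))
    rw [← le_sub_iff_add_le', div_le_iff₀ h2r]
    exact hj.1
  · refine mul_lt_mul_of_pos_right ?_ (inv_pos.2 (zpow_pos two_pos _))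
    rw [← sub_lt_iff_lt_add', lt_div_iff₀ h2r]
    exact hj.2

lemma volume_hatHMH_preimage_singleton_le (q r : ℕ) (k j : ℤ) :
    volume (hatHMH q r ⁻¹' {(k, j)}) ≤ ENNReal.ofReal ((2 ^ k)⁻¹ / 2 ^ r) := calc
  volume (hatHMH q r ⁻¹' {(k, j)})
      ≤ volume (Set.Ico ((1 + j / 2 ^ r) * ((2 : ℝ) ^ k)⁻¹)
          ((1 + (j + 1) / 2 ^ r) * ((2 : ℝ) ^ k)⁻¹)) :=
    measure_mono fun _ hx => mem_Ico_of_hatHMH_eq hx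
  _ = ENNReal.ofReal ((2 ^ k)⁻¹ / 2 ^ r) := by rw [Real.volume_Ico]; ring_nf

lemma measurable_rhoHMH (q : ℕ) : Measurable (rhoHMH q) :=
  ((Real.measurable_log.div_const _).neg.floor.add_const _).min measurable_const

lemma measurable_hatHMH (q r : ℕ) : Measurable (hatHMH q r) := by
  have hpow : Measurable fun x => (2 : ℝ) ^ rhoHMH q x :=
    (measurable_from_top (f := fun z : ℤ => (2 : ℝ) ^ z)).comp (measurable_rhoHMH q)
  exact (measurable_rhoHMH q).prodMk (((measurable_id.mul hpow).sub_const 1).mul_const _).floor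

section
variable {Ω : Type*} [MeasurableSpace Ω] {μ : Measure Ω}

lemma ProbabilityTheory.IndepFun.measure_setOf_eq_le_tsum {β : Type*} [MeasurableSpace β]
    [MeasurableSingletonClass β] [Countable β] {U V : Ω → β} (h : IndepFun U V μ) :
    μ {ω | U ω = V ω} ≤ ∑' b, μ (U ⁻¹' {b}) * μ (V ⁻¹' {b}) := calc
  μ {ω | U ω = V ω} = μ (⋃ b, U ⁻¹' {b} ∩ V ⁻¹' {b}) := by
    congr 1; ext ω; simp [eq_comm]
  _ ≤ ∑' b, μ (U ⁻¹' {b} ∩ V ⁻¹' {b}) := measure_iUnion_le _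
  _ = ∑' b, μ (U ⁻¹' {b}) * μ (V ⁻¹' {b}) := by
    simp_rw [h.measure_inter_preimage_eq_mul _ _ (measurableSet_singleton _)
      (measurableSet_singleton _)]

section Uniform
variable {v : Ω → ℝ}

lemma aemeasurable_of_map_eq_restrict_Icc (hv : μ.map v = volume.restrict (Set.Icc 0 1)) :
    AEMeasurable v μ :=
  AEMeasurable.of_map_ne_zero (by simp [hv])

lemma measure_preimage_of_map_eq_restrict_Icc (hv : μ.map v = volume.restrict (Set.Icc 0 1))
    {S : Set ℝ} (hS : MeasurableSet S) :
    μ (v ⁻¹' S) = volume (S ∩ Set.Icc 0 1) := by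
  rw [← Measure.map_apply_of_aemeasurable (aemeasurable_of_map_eq_restrict_Icc hv) hS, hv,
    Measure.restrict_apply hS]

lemma measure_ge_le_of_map_eq_restrict_Icc (hv : μ.map v = volume.restrict (Set.Icc 0 1))
    (a : ℝ) :
    μ {ω | a ≤ v ω} ≤ ENNReal.ofReal (1 - a) := calc
  μ {ω | a ≤ v ω} = volume (Set.Ici a ∩ Set.Icc 0 1) :=
    measure_preimage_of_map_eq_restrict_Icc hv measurableSet_Ici
  _ ≤ volume (Set.Icc a 1) := measure_mono fun _ hx => ⟨hx.1, hx.2.2⟩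
  _ = ENNReal.ofReal (1 - a) := Real.volume_Icc

end Uniform

section iInf
variable {ι : Type*} [Fintype ι] [Nonempty ι] {u : ι → Ω → ℝ}

lemma measure_iInf_mem_le_sum (S : Set ℝ) :
    μ {ω | ⨅ i, u i ω ∈ S} ≤ ∑ i, μ (u i ⁻¹' S) := by
  refine (measure_mono fun ω hω => ?_).trans (measure_iUnion_fintype_le μ _)
  obtain ⟨i, hi⟩ := exists_eq_ciInf_of_finite (f := fun i => u i ω)
  exact Set.mem_iUnion.2 ⟨i, by simpa [Set.mem_preimage, hi] using hω⟩

lemma ProbabilityTheory.iIndepFun.measure_le_iInf_eq_prod (h : iIndepFun u μ) (a : ℝ) :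
    μ {ω | a ≤ ⨅ i, u i ω} = ∏ i, μ {ω | a ≤ u i ω} := by
  have hset : {ω | a ≤ ⨅ i, u i ω} = ⋂ i ∈ (univ : Finset ι), u i ⁻¹' Set.Ici a := by
    ext ω
    simp [le_ciInf_iff (Finite.bddBelow_range _)]
  rw [hset, h.measure_inter_preimage_eq_mul _ fun _ _ => measurableSet_Ici]
  rfl

lemma measure_iInf_mem_le_card_mul (hunif : ∀ i, μ.map (u i) = volume.restrict (Set.Icc 0 1))
    {S : Set ℝ} (hS : MeasurableSet S) :
    μ {ω | ⨅ i, u i ω ∈ S} ≤ Fintype.card ι * volume (S ∩ Set.Icc 0 1) := calc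
  μ {ω | ⨅ i, u i ω ∈ S} ≤ ∑ i, μ (u i ⁻¹' S) := measure_iInf_mem_le_sum S
  _ = Fintype.card ι * volume (S ∩ Set.Icc 0 1) := by
    simp [measure_preimage_of_map_eq_restrict_Icc (hunif _) hS]

lemma ae_iInf_pos (hunif : ∀ i, μ.map (u i) = volume.restrict (Set.Icc 0 1)) :
    ∀ᵐ ω ∂μ, 0 < ⨅ i, u i ω := by
  rw [ae_iff]
  refine le_antisymm ?_ zero_le
  calc μ {ω | ¬0 < ⨅ i, u i ω} = μ {ω | ⨅ i, u i ω ∈ Set.Iic 0} := by simp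
    _ ≤ Fintype.card ι * volume (Set.Iic 0 ∩ Set.Icc (0 : ℝ) 1) :=
      measure_iInf_mem_le_card_mul hunif measurableSet_Iic
    _ ≤ Fintype.card ι * volume ({0} : Set ℝ) := by
      gcongr
      exact fun x hx => le_antisymm hx.1 hx.2.1
    _ = 0 := by simp

lemma ProbabilityTheory.iIndepFun.measure_le_iInf_le_pow (h : iIndepFun u μ)
    (hunif : ∀ i, μ.map (u i) = volume.restrict (Set.Icc 0 1)) (a : ℝ) :
    μ {ω | a ≤ ⨅ i, u i ω} ≤ ENNReal.ofReal (1 - a) ^ Fintype.card ι := by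
  rw [h.measure_le_iInf_eq_prod, ← card_univ, ← prod_const]
  exact prod_le_prod' fun i _ => measure_ge_le_of_map_eq_restrict_Icc (hunif i) a

end iInf

lemma ProbabilityTheory.iIndepFun.indepFun_iInf_inl_iInf_inr {ι κ : Type*} [Fintype ι]
    [Fintype κ] {u : ι ⊕ κ → Ω → ℝ} (h : iIndepFun u μ) (hu : ∀ s, AEMeasurable (u s) μ) :
    IndepFun (fun ω => ⨅ i, u (.inl i) ω) (fun ω => ⨅ j, u (.inr j) ω) μ := by
  classical
  have hdisj : Disjoint (univ.map .inl) (univ.map .inr : Finset (ι ⊕ κ)) := by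
    simp [disjoint_left]
  exact (h.indepFun_finset₀ _ _ hdisj hu).comp
    (φ := fun w => ⨅ i, w ⟨.inl i, by simp⟩) (ψ := fun w => ⨅ j, w ⟨.inr j, by simp⟩)
    (.iInf fun i => measurable_pi_apply _) (.iInf fun j => measurable_pi_apply _)

section HyperMinHash
variable {X Y : Ω → ℝ}

lemma measure_hatHMH_eq_le_tsum (q r m : ℕ) (hXY : IndepFun X Y μ) (hX : AEMeasurable X μ)
    (hY : ∀ S, MeasurableSet S → μ (Y ⁻¹' S) ≤ m * volume S) :
    μ {ω | hatHMH q r (X ω) = hatHMH q r (Y ω)} ≤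
      ∑' k : ℤ, μ (X ⁻¹' (rhoHMH q ⁻¹' {k})) * (m * ENNReal.ofReal ((2 ^ k)⁻¹ / 2 ^ r)) := by
  have hlevel (k : ℤ) :
      ∑' j, μ (X ⁻¹' (hatHMH q r ⁻¹' {(k, j)})) = μ (X ⁻¹' (rhoHMH q ⁻¹' {k})) := by
    rw [← measure_iUnion₀]
    · congr 1
      ext ω
      simp [hatHMH]
    · refine fun j j' hjj' => Disjoint.aedisjoint ?_
      refine Set.disjoint_left.2 fun ω hj hj' => hjj' ?_
      simp only [Set.mem_preimage, Set.mem_singleton_iff] at hj hj'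
      exact congrArg Prod.snd (hj.symm.trans hj')
    · exact fun j => hX.nullMeasurable (measurable_hatHMH q r (measurableSet_singleton _))
  calc μ {ω | hatHMH q r (X ω) = hatHMH q r (Y ω)}
      ≤ ∑' p, μ (X ⁻¹' (hatHMH q r ⁻¹' {p})) * μ (Y ⁻¹' (hatHMH q r ⁻¹' {p})) :=
        (hXY.comp (measurable_hatHMH q r) (measurable_hatHMH q r)).measure_setOf_eq_le_tsum
    _ ≤ ∑' p : ℤ × ℤ, μ (X ⁻¹' (hatHMH q r ⁻¹' {p})) *
          (m * ENNReal.ofReal ((2 ^ p.1)⁻¹ / 2 ^ r)) :=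
        ENNReal.tsum_le_tsum fun p => mul_le_mul_right
          ((hY _ (measurable_hatHMH q r (measurableSet_singleton p))).trans
            (mul_le_mul_right (volume_hatHMH_preimage_singleton_le q r p.1 p.2) _)) _
    _ = ∑' k : ℤ, μ (X ⁻¹' (rhoHMH q ⁻¹' {k})) * (m * ENNReal.ofReal ((2 ^ k)⁻¹ / 2 ^ r)) := by
        simp_rw [ENNReal.tsum_prod', ENNReal.tsum_mul_right, hlevel]

lemma measure_preimage_rhoHMH_le {q m : ℕ} (hX0 : ∀ᵐ ω ∂μ, 0 < X ω)
    (htail : ∀ a : ℝ, 0 ≤ a → μ {ω | a ≤ X ω} ≤ ENNReal.ofReal (1 - a) ^ m)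
    {k : ℤ} (hk : k < 2 ^ q) :
    μ (X ⁻¹' (rhoHMH q ⁻¹' {k})) ≤ ENNReal.ofReal (1 - (2 ^ k)⁻¹) ^ m := by
  refine (measure_mono_ae ?_).trans (htail _ (inv_nonneg.2 (zpow_nonneg zero_le_two _)))
  filter_upwards [hX0] with ω hω hρ
  exact (inv_two_zpow_lt_of_rhoHMH_eq hω hk hρ).le

lemma tsum_measure_preimage_rhoHMH_mul_le [IsProbabilityMeasure μ] {q m : ℕ} (hm : m ≠ 0)
    (hX0 : ∀ᵐ ω ∂μ, 0 < X ω)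
    (htail : ∀ a : ℝ, 0 ≤ a → μ {ω | a ≤ X ω} ≤ ENNReal.ofReal (1 - a) ^ m) (c : ℤ → ℝ≥0∞) :
    ∑' k : ℤ, μ (X ⁻¹' (rhoHMH q ⁻¹' {k})) * c k ≤
      ∑ k ∈ range (2 ^ q), ENNReal.ofReal (1 - (2 ^ k)⁻¹) ^ m * c k + c (2 ^ q) := by
  rw [tsum_eq_sum (s := (range (2 ^ q + 1)).map Nat.castEmbedding), sum_map, sum_range_succ]
  · simp only [Nat.castEmbedding_apply, Nat.cast_pow, Nat.cast_ofNat]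
    gcongr with k hk
    · have := measure_preimage_rhoHMH_le hX0 htail (k := k) (by exact_mod_cast mem_range.1 hk)
      simpa using this
    · exact mul_le_of_le_one_left' prob_le_one
  · intro k hk
    suffices μ (X ⁻¹' (rhoHMH q ⁻¹' {k})) = 0 by rw [this, zero_mul]
    rcases lt_or_ge k 0 with hneg | hnonneg
    · have hle : ENNReal.ofReal (1 - (2 ^ k)⁻¹) = 0 :=
        ENNReal.ofReal_of_nonpos (sub_nonpos.2 (one_le_inv_iff₀.2 ⟨zpow_pos two_pos _,
          zpow_le_one_of_nonpos₀ one_le_two hneg.le⟩))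
      refine le_antisymm ?_ zero_le
      calc μ (X ⁻¹' (rhoHMH q ⁻¹' {k})) ≤ ENNReal.ofReal (1 - (2 ^ k)⁻¹) ^ m :=
            measure_preimage_rhoHMH_le hX0 htail (hneg.trans (by positivity))
        _ = 0 := by rw [hle, zero_pow hm]
    · have hk_gt : 2 ^ q < k := by
        lift k to ℕ using hnonneg
        simp only [mem_map, mem_range, Nat.castEmbedding_apply, Nat.cast_inj,
          exists_eq_right, not_lt] at hk
        exact_mod_cast hk
      convert measure_empty (μ := μ)
      exact Set.eq_empty_of_forall_notMem fun x hx =>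
        (rhoHMH_le q (X x)).not_gt (hx.symm ▸ hk_gt)

theorem measure_hatHMH_eq_le_of_tail [IsProbabilityMeasure μ] (q r : ℕ) {m : ℕ} (hm : m ≠ 0)
    (hXY : IndepFun X Y μ) (hX : AEMeasurable X μ) (hX0 : ∀ᵐ ω ∂μ, 0 < X ω)
    (htail : ∀ a : ℝ, 0 ≤ a → μ {ω | a ≤ X ω} ≤ ENNReal.ofReal (1 - a) ^ m)
    (hY : ∀ S, MeasurableSet S → μ (Y ⁻¹' S) ≤ m * volume S) :
    μ {ω | hatHMH q r (X ω) = hatHMH q r (Y ω)} ≤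
      ENNReal.ofReal (6 / 2 ^ r + m / 2 ^ (2 ^ q + r)) := by
  have hx (k : ℕ) : 0 ≤ 1 - ((2 : ℝ) ^ k)⁻¹ := sub_nonneg.2 (inv_two_pow_mem_Icc k).2
  calc μ {ω | hatHMH q r (X ω) = hatHMH q r (Y ω)}
      ≤ ∑ k ∈ range (2 ^ q), ENNReal.ofReal (1 - ((2 : ℝ) ^ k)⁻¹) ^ m *
          (m * ENNReal.ofReal (((2 : ℝ) ^ k)⁻¹ / 2 ^ r)) +
          m * ENNReal.ofReal (((2 : ℝ) ^ 2 ^ q)⁻¹ / 2 ^ r) := by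
        have := tsum_measure_preimage_rhoHMH_mul_le (q := q) hm hX0 htail
          fun k => m * ENNReal.ofReal ((2 ^ k)⁻¹ / 2 ^ r)
        simp only [zpow_natCast] at this
        exact (measure_hatHMH_eq_le_tsum q r m hXY hX hY).trans this
    _ = ENNReal.ofReal ((∑ k ∈ range (2 ^ q), (m : ℝ) * (2 ^ k)⁻¹ * (1 - (2 ^ k)⁻¹) ^ m) / 2 ^ r
          + m / 2 ^ (2 ^ q + r)) := by
        have hterm : ∀ k : ℕ, 0 ≤ (m : ℝ) * (2 ^ k)⁻¹ * (1 - (2 ^ k)⁻¹) ^ m / 2 ^ r :=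
          fun k => by have := hx k; positivity
        rw [sum_div, ENNReal.ofReal_add (sum_nonneg fun k _ => hterm k) (by positivity),
          ENNReal.ofReal_sum_of_nonneg fun k _ => hterm k]
        congr 1
        · refine sum_congr rfl fun k _ => ?_
          rw [← ENNReal.ofReal_pow (hx k), ← ENNReal.ofReal_natCast,
            ← ENNReal.ofReal_mul (by positivity),
            ← ENNReal.ofReal_mul (by have := hx k; positivity)]
          congr 1
          ring
        · rw [← ENNReal.ofReal_natCast, ← ENNReal.ofReal_mul (by positivity), pow_add]
          congr 1
          field_simp
    _ ≤ ENNReal.ofReal (6 / 2 ^ r + m / 2 ^ (2 ^ q + r)) := by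
        gcongr
        exact sum_range_mul_inv_two_pow_mul_one_sub_pow_le m _

end HyperMinHash

end

theorem hyperminhash_single_bucket_collision_bound_general
    {Ω : Type*} [MeasurableSpace Ω] (μ : Measure Ω) [IsProbabilityMeasure μ]
    (q r : ℕ) (n m : ℕ) (hm : 1 ≤ m) (hmn : m ≤ n)
    (u : Fin n ⊕ Fin m → Ω → ℝ)
    (hindep : iIndepFun u μ)
    (hunif : ∀ s, Measure.map (u s) μ = volume.restrict (Set.Icc (0 : ℝ) 1))
    (X Y : Ω → ℝ)
    (hX : X = fun ω => ⨅ i : Fin n, u (Sum.inl i) ω)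
    (hY : Y = fun ω => ⨅ j : Fin m, u (Sum.inr j) ω) :
    (μ {ω | hatHMH q r (X ω) = hatHMH q r (Y ω)}).toReal
      ≤ 6 / 2 ^ r + (n : ℝ) / 2 ^ (2 ^ q + r) := by
  subst hX hY
  have : Nonempty (Fin m) := ⟨⟨0, hm⟩⟩
  have : Nonempty (Fin n) := ⟨⟨0, by omega⟩⟩
  have hae : ∀ s, AEMeasurable (u s) μ := fun s => aemeasurable_of_map_eq_restrict_Icc (hunif s)
  have htail (a : ℝ) (ha : 0 ≤ a) :
      μ {ω | a ≤ ⨅ i, u (.inl i) ω} ≤ ENNReal.ofReal (1 - a) ^ m := calc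
    _ ≤ ENNReal.ofReal (1 - a) ^ n := by
      simpa using (hindep.precomp Sum.inl_injective).measure_le_iInf_le_pow (fun i => hunif _) a
    _ ≤ ENNReal.ofReal (1 - a) ^ m :=
      pow_le_pow_right_of_le_one' (ENNReal.ofReal_le_one.2 (by linarith)) hmn
  have hY (S : Set ℝ) (hS : MeasurableSet S) :
      μ {ω | ⨅ j, u (.inr j) ω ∈ S} ≤ m * volume S := calc
    _ ≤ m * volume (S ∩ Set.Icc 0 1) := by
      simpa using measure_iInf_mem_le_card_mul (u := fun j => u (.inr j)) (fun j => hunif _) hS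
    _ ≤ m * volume S := by gcongr; exact Set.inter_subset_left
  refine ENNReal.toReal_le_of_le_ofReal (by positivity) ?_
  refine (measure_hatHMH_eq_le_of_tail q r (by omega) (hindep.indepFun_iInf_inl_iInf_inr hae)
    (.iInf fun i => hae _) (ae_iInf_pos fun i => hunif _) htail hY).trans ?_
  gcongr

/-- **Single-bucket HyperMinHash collision bound** (Proposition `thm:gamma`):
for `1 ≤ m ≤ n ≤ 2^{2^q + r}`,
`P(ĥ_{q,r}(X) = ĥ_{q,r}(Y)) ≤ 6/2^r + n/2^{2^q + r}`. -/
theorem hyperminhash_single_bucket_collision_bound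
    {Ω : Type*} [MeasurableSpace Ω] (μ : Measure Ω) [IsProbabilityMeasure μ]
    (q r : ℕ) (n m : ℕ) (hm : 1 ≤ m) (hmn : m ≤ n) (hnb : n ≤ 2 ^ (2 ^ q + r))
    (u : Fin n ⊕ Fin m → Ω → ℝ)
    (hmeas : ∀ s, Measurable (u s))
    (hindep : iIndepFun u μ)
    (hunif : ∀ s, Measure.map (u s) μ = volume.restrict (Set.Icc (0 : ℝ) 1))
    (X Y : Ω → ℝ)
    (hX : X = fun ω => ⨅ i : Fin n, u (Sum.inl i) ω)
    (hY : Y = fun ω => ⨅ j : Fin m, u (Sum.inr j) ω) :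
    (μ {ω | hatHMH q r (X ω) = hatHMH q r (Y ω)}).toReal
      ≤ 6 / 2 ^ r + (n : ℝ) / 2 ^ (2 ^ q + r) :=
  hyperminhash_single_bucket_collision_bound_general μ q r n m hm hmn u hindep hunif X Y hX hY
end

section
/- Let A and B be disjoint finite sets with |A| = n ≥ 1, |B| = m ≥ 1, m ≤ n ≤ 2^{2^q + r}, let p, q, r ∈ ℕ, and let (h(s))_{s∈A∪B} be independent uniform [0,1] random variables. For a set S and bucket index i ∈ {0,…,2^p−1}, say bucket i of S is occupied if some s ∈ S has i·2^{−p} < h(s) < (i+1)·2^{−p}, and in that case let f(S)_i = ĥ_{q,r}( min{ h(s)·2^p − i : s ∈ S, i·2^{−p} < h(s) < (i+1)·2^{−p} } ). Let Z_i be the indicator that bucket i is occupied for both A and B and f(A)_i = f(B)_i. Then for every i, E[Z_i] ≤ 5/2^r + n/2^{p + 2^q + r}. -/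
open MeasureTheory ProbabilityTheory

/-- Bucket `i` of the set `S` is occupied: some `s ∈ S` has `i·2^{−p} < h(s) < (i+1)·2^{−p}`. -/
def bucketOccupied {ι Ω : Type*} (h : ι → Ω → ℝ) (p : ℕ) (S : Finset ι) (i : ℕ) (ω : Ω) :
    Prop :=
  ∃ s ∈ S, (i : ℝ) / 2 ^ p < h s ω ∧ h s ω < ((i : ℝ) + 1) / 2 ^ p

/-- The rescaled minimum hash `min{h(s)·2^p − i : s ∈ S, i·2^{−p} < h(s) < (i+1)·2^{−p}}`
of bucket `i` of the set `S`. -/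
noncomputable def bucketMin {ι Ω : Type*} (h : ι → Ω → ℝ) (p : ℕ) (S : Finset ι) (i : ℕ)
    (ω : Ω) : ℝ :=
  sInf {x : ℝ | ∃ s ∈ S, ((i : ℝ) / 2 ^ p < h s ω ∧ h s ω < ((i : ℝ) + 1) / 2 ^ p)
    ∧ x = h s ω * 2 ^ p - i}

/-!
Condition on the value `(k, j)` of bucket `i` of `A`. The hashes of `B` are independent of
those of `A`, and a collision needs one of them to fall into the interval of hash values encoded
by `(k, j)`, of length `2 ^ (-(p + k + r))`; this has probability at most `m / 2 ^ (p + k + r)`.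
On the other hand `ρ = k < 2 ^ q` forces all `n` hashes of `A` to avoid the first
`2 ^ (-(p + k))` of the bucket, which has probability
`(1 - 2 ^ (-(p + k))) ^ n ≤ 2 / (1 + n / 2 ^ (p + k)) ^ 2`. Summed over `k < 2 ^ q` these
bounds telescope to `4 / 2 ^ r`, and the truncated level `k = 2 ^ q` contributes at most
`n / 2 ^ (p + 2 ^ q + r)`.
-/

namespace HyperMinHash

open Finset

lemma one_div_two_pow_le_one (k : ℕ) : (1 : ℝ) / 2 ^ k ≤ 1 :=
  div_le_one_of_le₀ (one_le_pow₀ one_le_two) (by positivity)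

lemma one_sub_pow_le_two_div_sq (n : ℕ) {s : ℝ} (hs0 : 0 ≤ s) (hs1 : s ≤ 1) :
    (1 - s) ^ n ≤ 2 / (1 + n * s) ^ 2 := by
  have hns : 0 ≤ (n : ℝ) * s := by positivity
  calc (1 - s) ^ n ≤ Real.exp (-s) ^ n :=
        pow_le_pow_left₀ (by linarith) (Real.one_sub_le_exp_neg s) n
    _ = (Real.exp (n * s))⁻¹ := by rw [← Real.exp_nat_mul, ← Real.exp_neg]; ring_nf
    _ ≤ 2 / (1 + n * s) ^ 2 := by
        rw [inv_eq_one_div, div_le_div_iff₀ (Real.exp_pos _) (by positivity)]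
        nlinarith [Real.quadratic_le_exp_of_nonneg hns]

/-- Each term is bounded by a difference of consecutive values of `4 / (1 + y / 2 ^ k)`. -/
lemma sum_Ico_two_mul_div_sq_le (y : ℝ) (hy : 0 ≤ y) (N : ℕ) :
    ∑ k ∈ Ico 1 N, 2 * (y / 2 ^ k) / (1 + y / 2 ^ k) ^ 2 ≤ 4 := by
  suffices key : ∀ N, ∑ k ∈ Ico 1 (N + 1), 2 * (y / 2 ^ k) / (1 + y / 2 ^ k) ^ 2
      ≤ 4 / (1 + y / 2 ^ N) - 4 / (1 + y) by
    rcases N with _ | N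
    · simp
    · have : 0 ≤ 4 / (1 + y) := by positivity
      have : 4 / (1 + y / 2 ^ N) ≤ 4 :=
        div_le_self (by norm_num) (le_add_of_nonneg_right (by positivity))
      linarith [key N]
  intro N
  induction N with
  | zero => simp
  | succ N ih =>
    rw [sum_Ico_succ_top (by omega)]
    set z := y / 2 ^ (N + 1)
    have hz : 0 ≤ z := by positivity
    have hyN : y / 2 ^ N = 2 * z := by simp only [z, pow_succ]; field_simp
    have step : 2 * z / (1 + z) ^ 2 ≤ 4 / (1 + z) - 4 / (1 + 2 * z) := by
      rw [div_sub_div _ _ (by positivity) (by positivity),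
        div_le_div_iff₀ (by positivity) (by positivity)]
      nlinarith [mul_nonneg hz hz, mul_nonneg (mul_nonneg hz hz) hz]
    rw [hyN] at ih
    linarith

lemma sum_Icc_mul_div_two_pow_le (p q r : ℕ) {n m : ℕ} (hmn : m ≤ n) (P : ℕ → ℝ)
    (hP1 : ∀ k, P k ≤ 1) (hP : ∀ k < 2 ^ q, P k ≤ (1 - 1 / 2 ^ (p + k)) ^ n) :
    ∑ k ∈ Icc 1 (2 ^ q), P k * (m / 2 ^ (p + k + r))
      ≤ 4 / 2 ^ r + (n : ℝ) / 2 ^ (p + 2 ^ q + r) := by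
  have hmn' : (m : ℝ) ≤ n := by exact_mod_cast hmn
  rw [Icc_eq_cons_Ico Nat.one_le_two_pow, sum_cons, add_comm]
  gcongr
  · set y : ℝ := n / 2 ^ p
    have hterm : ∀ k ∈ Ico 1 (2 ^ q), P k * (m / 2 ^ (p + k + r))
        ≤ 2 * (y / 2 ^ k) / (1 + y / 2 ^ k) ^ 2 / 2 ^ r := by
      intro k hk
      have hkq := (mem_Ico.mp hk).2
      have hz : (n : ℝ) / 2 ^ (p + k) = y / 2 ^ k := by rw [pow_add, div_div]
      have hPk : P k ≤ 2 / (1 + y / 2 ^ k) ^ 2 := by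
        refine (hP k hkq).trans ?_
        rw [← hz, div_eq_mul_one_div (n : ℝ)]
        exact one_sub_pow_le_two_div_sq n (by positivity) (one_div_two_pow_le_one _)
      have hw : (m : ℝ) / 2 ^ (p + k + r) ≤ y / 2 ^ k / 2 ^ r := by
        rw [← hz, pow_add, ← div_div]
        gcongr
      calc P k * (m / 2 ^ (p + k + r)) ≤ 2 / (1 + y / 2 ^ k) ^ 2 * (y / 2 ^ k / 2 ^ r) :=
            mul_le_mul hPk hw (by positivity) (by positivity)
        _ = _ := by ring
    calc ∑ k ∈ Ico 1 (2 ^ q), P k * (m / 2 ^ (p + k + r))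
        ≤ ∑ k ∈ Ico 1 (2 ^ q), 2 * (y / 2 ^ k) / (1 + y / 2 ^ k) ^ 2 / 2 ^ r := sum_le_sum hterm
      _ ≤ 4 / 2 ^ r := by
        rw [← sum_div]
        gcongr
        exact sum_Ico_two_mul_div_sq_le y (by positivity) _
  · calc P (2 ^ q) * (m / 2 ^ (p + 2 ^ q + r)) ≤ 1 * (n / 2 ^ (p + 2 ^ q + r)) := by
          gcongr
          exact hP1 _
      _ = _ := one_mul _

lemma one_le_rhoHMH (q : ℕ) {x : ℝ} (hx0 : 0 < x) (hx1 : x ≤ 1) : 1 ≤ rhoHMH q x := by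
  have : 0 ≤ ⌊-Real.logb 2 x⌋ :=
    Int.floor_nonneg.mpr (neg_nonneg.mpr (Real.logb_nonpos one_lt_two hx0.le hx1))
  exact le_min (by omega) (one_le_pow₀ (by norm_num))

lemma one_div_two_pow_lt_of_rhoHMH_eq {q k : ℕ} {x : ℝ} (hx : 0 < x)
    (hρ : rhoHMH q x = k) (hk : k < 2 ^ q) : 1 / 2 ^ k < x := by
  have hfloor : ⌊-Real.logb 2 x⌋ + 1 = k := by
    rw [rhoHMH] at hρ
    have : (k : ℤ) < 2 ^ q := by exact_mod_cast hk
    omega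
  have hlog : -(k : ℝ) < Real.logb 2 x := by
    have hcast : ((⌊-Real.logb 2 x⌋ + 1 : ℤ) : ℝ) = k := by exact_mod_cast hfloor
    push_cast at hcast
    linarith [Int.lt_floor_add_one (-Real.logb 2 x)]
  rw [Real.lt_logb_iff_rpow_lt one_lt_two hx, Real.rpow_neg zero_le_two,
    Real.rpow_natCast] at hlog
  rwa [one_div]

/-- The values `x` with `ĥ_{q,r}(x) = (k, j)`, up to the truncation of `ρ_q`. -/
def hmhCell (r k : ℕ) (j : ℤ) : Set ℝ :=
  Set.Ico ((1 + j / 2 ^ r) / 2 ^ k) ((1 + (j + 1) / 2 ^ r) / 2 ^ k)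

lemma mem_hmhCell_of_hatHMH_eq {q r k : ℕ} {j : ℤ} {x : ℝ} (hx : hatHMH q r x = ((k : ℤ), j)) :
    x ∈ hmhCell r k j := by
  simp only [hatHMH, sigmaHMH, Prod.mk.injEq] at hx
  obtain ⟨hρ, hσ⟩ := hx
  rw [hρ, zpow_natCast] at hσ
  have hfl := Int.floor_le ((x * 2 ^ k - 1) * 2 ^ r)
  have hlt := Int.lt_floor_add_one ((x * 2 ^ k - 1) * 2 ^ r)
  rw [hσ] at hfl hlt
  constructor
  · rw [div_le_iff₀ (by positivity), ← le_sub_iff_add_le', div_le_iff₀ (by positivity)]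
    exact hfl
  · rw [lt_div_iff₀ (by positivity), ← sub_lt_iff_lt_add', lt_div_iff₀ (by positivity)]
    exact hlt

lemma volume_hmhCell (r k : ℕ) (j : ℤ) :
    volume (hmhCell r k j) = ENNReal.ofReal (1 / 2 ^ (k + r)) := by
  rw [hmhCell, Real.volume_Ico]
  congr 1
  rw [pow_add]
  field_simp
  ring

lemma measurable_hatHMH (q r : ℕ) : Measurable (hatHMH q r) := by
  have hρ : Measurable (rhoHMH q) :=
    ((Real.measurable_log.div_const _).neg.floor.add_const 1).min measurable_const
  have hpow : Measurable fun x => (2 : ℝ) ^ rhoHMH q x :=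
    (measurable_from_top (f := fun k : ℤ => (2 : ℝ) ^ k)).comp hρ
  exact hρ.prodMk (((measurable_id.mul hpow).sub_const 1).mul_const _).floor

section

def bucketIoo (p i : ℕ) : Set ℝ := Set.Ioo ((i : ℝ) / 2 ^ p) (((i : ℝ) + 1) / 2 ^ p)

lemma mem_bucketIoo_iff {p i : ℕ} {x : ℝ} :
    x ∈ bucketIoo p i ↔ x * 2 ^ p - i ∈ Set.Ioo (0 : ℝ) 1 := by
  simp only [bucketIoo, Set.mem_Ioo, div_lt_iff₀ (by positivity : (0 : ℝ) < 2 ^ p),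
    lt_div_iff₀ (by positivity : (0 : ℝ) < 2 ^ p), sub_pos, sub_lt_iff_lt_add']

variable {ι Ω : Type*} {h : ι → Ω → ℝ} {p i : ℕ} {S : Finset ι} {ω : Ω}

lemma bucketMin_le {s : ι} (hs : s ∈ S) (hsi : h s ω ∈ bucketIoo p i) :
    bucketMin h p S i ω ≤ h s ω * 2 ^ p - i := by
  refine csInf_le ⟨0, ?_⟩ ⟨s, hs, hsi, rfl⟩
  rintro x ⟨t, -, hti, rfl⟩
  exact (mem_bucketIoo_iff.mp hti).1.le

lemma bucketMin_eq_of_forall_le {s : ι} (hs : s ∈ S) (hsi : h s ω ∈ bucketIoo p i)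
    (hmin : ∀ t ∈ S, h t ω ∈ bucketIoo p i → h s ω ≤ h t ω) :
    bucketMin h p S i ω = h s ω * 2 ^ p - i := by
  refine le_antisymm (bucketMin_le hs hsi) (le_csInf ⟨_, s, hs, hsi, rfl⟩ ?_)
  rintro x ⟨t, ht, hti, rfl⟩
  have := hmin t ht hti
  gcongr

lemma exists_forall_le_of_bucketOccupied (hocc : bucketOccupied h p S i ω) :
    ∃ s ∈ S, h s ω ∈ bucketIoo p i ∧ ∀ t ∈ S, h t ω ∈ bucketIoo p i → h s ω ≤ h t ω := by
  classical
  obtain ⟨s₀, hs₀, hs₀i⟩ := hocc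
  obtain ⟨s, hs, hmin⟩ := (S.filter (h · ω ∈ bucketIoo p i)).exists_min_image (h · ω)
    ⟨s₀, Finset.mem_filter.mpr ⟨hs₀, hs₀i⟩⟩
  rw [Finset.mem_filter] at hs
  exact ⟨s, hs.1, hs.2, fun t ht hti => hmin t (Finset.mem_filter.mpr ⟨ht, hti⟩)⟩

lemma exists_bucketMin_eq (hocc : bucketOccupied h p S i ω) :
    ∃ s ∈ S, h s ω ∈ bucketIoo p i ∧ bucketMin h p S i ω = h s ω * 2 ^ p - i := by
  obtain ⟨s, hs, hsi, hmin⟩ := exists_forall_le_of_bucketOccupied hocc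
  exact ⟨s, hs, hsi, bucketMin_eq_of_forall_le hs hsi hmin⟩

lemma bucketMin_mem_Ioo (hocc : bucketOccupied h p S i ω) :
    bucketMin h p S i ω ∈ Set.Ioo (0 : ℝ) 1 := by
  obtain ⟨s, -, hsi, heq⟩ := exists_bucketMin_eq hocc
  exact heq ▸ mem_bucketIoo_iff.mp hsi

/-- Through the hash attaining the minimum, the event is a finite Boolean combination of events
on single hashes. -/
lemma measurableSet_bucketOccupied_and_bucketMin_mem {mΩ : MeasurableSpace Ω}
    (hmeas : ∀ s ∈ S, Measurable (h s)) {T : Set ℝ} (hT : MeasurableSet T) :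
    MeasurableSet {ω | bucketOccupied h p S i ω ∧ bucketMin h p S i ω ∈ T} := by
  have hrep : {ω | bucketOccupied h p S i ω ∧ bucketMin h p S i ω ∈ T} =
      ⋃ s ∈ S, (h s ⁻¹' (bucketIoo p i ∩ (fun x => x * 2 ^ p - i) ⁻¹' T) ∩
        ⋂ t ∈ S, {ω | h t ω ∈ bucketIoo p i → h s ω ≤ h t ω}) := by
    ext ω
    simp only [Set.mem_ofPred_eq, Set.mem_iUnion, Set.mem_inter_iff, Set.mem_preimage,
      Set.mem_iInter, exists_prop]
    constructor
    · rintro ⟨hocc, hT⟩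
      obtain ⟨s, hs, hsi, hmin⟩ := exists_forall_le_of_bucketOccupied hocc
      exact ⟨s, hs, ⟨hsi, bucketMin_eq_of_forall_le hs hsi hmin ▸ hT⟩, hmin⟩
    · rintro ⟨s, hs, ⟨hsi, hT⟩, hmin⟩
      exact ⟨⟨s, hs, hsi⟩, (bucketMin_eq_of_forall_le hs hsi hmin).symm ▸ hT⟩
  rw [hrep]
  refine Finset.measurableSet_biUnion S fun s hs => ?_
  refine (hmeas s hs (measurableSet_Ioo.inter ?_)).inter
    (Finset.measurableSet_biInter S fun t ht => ?_)
  · exact (measurable_id.mul_const _).sub_const _ hT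
  · exact (hmeas t ht measurableSet_Ioo).imp (measurableSet_le (hmeas s hs) (hmeas t ht))

end

section

lemma volume_preimage_rescale (p i : ℕ) (T : Set ℝ) :
    volume ((fun x : ℝ => x * 2 ^ p - i) ⁻¹' T) = ENNReal.ofReal (1 / 2 ^ p) * volume T := by
  have hcomp : (fun x : ℝ => x * 2 ^ p - i) ⁻¹' T = (· * 2 ^ p) ⁻¹' ((· + -(i : ℝ)) ⁻¹' T) := by
    ext x
    simp [sub_eq_add_neg]
  rw [hcomp, Real.volume_preimage_mul_right (by positivity), measure_preimage_add_right,
    abs_of_pos (by positivity), one_div]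

variable {Ω : Type*} [MeasurableSpace Ω] {μ : Measure Ω} {X : Ω → ℝ}

lemma measure_rescale_mem (hX : Measurable X)
    (hunif : μ.map X = volume.restrict (Set.Icc 0 1)) (p i : ℕ) {T : Set ℝ}
    (hT : MeasurableSet T) :
    μ {ω | X ω * 2 ^ p - i ∈ T} = volume ((fun x : ℝ => x * 2 ^ p - i) ⁻¹' T ∩ Set.Icc 0 1) := by
  have hT' : MeasurableSet ((fun x : ℝ => x * 2 ^ p - i) ⁻¹' T) :=
    (measurable_id.mul_const _).sub_const _ hT
  rw [← Measure.restrict_apply hT', ← hunif, Measure.map_apply hX hT']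
  rfl

lemma measure_rescale_mem_le (hX : Measurable X)
    (hunif : μ.map X = volume.restrict (Set.Icc 0 1)) (p i : ℕ) {T : Set ℝ}
    (hT : MeasurableSet T) :
    μ {ω | X ω * 2 ^ p - i ∈ T} ≤ ENNReal.ofReal (1 / 2 ^ p) * volume T := by
  rw [measure_rescale_mem hX hunif p i hT, ← volume_preimage_rescale]
  exact measure_mono Set.inter_subset_left

lemma measure_rescale_mem_eq (hX : Measurable X)
    (hunif : μ.map X = volume.restrict (Set.Icc 0 1)) {p i : ℕ} (hi : i < 2 ^ p)
    {T : Set ℝ} (hT : MeasurableSet T) (hT01 : T ⊆ Set.Icc 0 1) :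
    μ {ω | X ω * 2 ^ p - i ∈ T} = ENNReal.ofReal (1 / 2 ^ p) * volume T := by
  have hsub : (fun x : ℝ => x * 2 ^ p - i) ⁻¹' T ⊆ Set.Icc 0 1 := by
    intro x hx
    obtain ⟨h0, h1⟩ := hT01 hx
    have hi' : (i : ℝ) + 1 ≤ 2 ^ p := by exact_mod_cast hi
    constructor <;> nlinarith [(by positivity : (0 : ℝ) < 2 ^ p)]
  rw [measure_rescale_mem hX hunif p i hT, Set.inter_eq_left.mpr hsub, volume_preimage_rescale]

end

section

variable {ι Ω : Type*} {h : ι → Ω → ℝ} {U : Finset ι}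

lemma iSup_comap_eq_iSup_comap_subtype {S : Finset ι} (hS : S ⊆ U) :
    (⨆ s ∈ S, MeasurableSpace.comap (h s) inferInstance) =
      ⨆ t ∈ {t : ↥U | ↑t ∈ S}, MeasurableSpace.comap (h t) inferInstance :=
  le_antisymm (iSup₂_le fun s hs => le_iSup₂_of_le (⟨s, hS hs⟩ : ↥U) hs le_rfl)
    (iSup₂_le fun t ht => le_iSup₂_of_le (t : ι) ht le_rfl)

lemma indep_iSup_comap_of_disjoint [MeasurableSpace Ω] {μ : Measure Ω}
    (hmeas : ∀ s ∈ U, Measurable (h s))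
    (hindep : iIndepFun (fun s : ↥U => h s) μ) {A B : Finset ι} (hA : A ⊆ U) (hB : B ⊆ U)
    (hAB : Disjoint A B) :
    Indep (⨆ s ∈ A, MeasurableSpace.comap (h s) inferInstance)
      (⨆ s ∈ B, MeasurableSpace.comap (h s) inferInstance) μ := by
  rw [iSup_comap_eq_iSup_comap_subtype hA, iSup_comap_eq_iSup_comap_subtype hB]
  exact indep_iSup_of_disjoint (fun t : ↥U => (hmeas t t.2).comap_le) hindep.iIndep
    (Set.disjoint_left.mpr fun t htA htB => Finset.disjoint_left.mp hAB htA htB)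

lemma measurable_of_mem_iSup_comap {S : Finset ι} {s : ι} (hs : s ∈ S) :
    Measurable[⨆ s ∈ S, MeasurableSpace.comap (h s) inferInstance] (h s) :=
  measurable_iff_comap_le.mpr
    (le_iSup₂ (f := fun s (_ : s ∈ S) => MeasurableSpace.comap (h s) inferInstance) s hs)

lemma measure_biInter_preimage_eq_prod [MeasurableSpace Ω] {μ : Measure Ω}
    (hindep : iIndepFun (fun s : ↥U => h s) μ)
    {S : Finset ι} (hS : S ⊆ U) {T : ι → Set ℝ} (hT : ∀ s ∈ S, MeasurableSet (T s)) :
    μ (⋂ s ∈ S, h s ⁻¹' T s) = ∏ s ∈ S, μ (h s ⁻¹' T s) := by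
  classical
  have hinter : ⋂ s ∈ S, h s ⁻¹' T s = ⋂ t ∈ S.subtype (· ∈ U), h t ⁻¹' T t := by
    ext ω
    simp only [Set.mem_iInter, Finset.mem_subtype, Subtype.forall]
    exact ⟨fun hω s _ hs => hω s hs, fun hω s hs => hω s (hS hs) hs⟩
  rw [hinter, hindep.meas_biInter fun t ht => ⟨T t, hT t (Finset.mem_subtype.mp ht), rfl⟩,
    Finset.prod_subtype_eq_prod_filter (fun s => μ (h s ⁻¹' T s)),
    Finset.filter_true_of_mem fun s hs => hS hs]

end

section

variable {ι Ω : Type*}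

def collisionEvent (h : ι → Ω → ℝ) (p q r : ℕ) (A B : Finset ι) (i : ℕ) : Set Ω :=
  {ω | bucketOccupied h p A i ω ∧ bucketOccupied h p B i ω
    ∧ hatHMH q r (bucketMin h p A i ω) = hatHMH q r (bucketMin h p B i ω)}

def bucketValueEvent (h : ι → Ω → ℝ) (p q r : ℕ) (S : Finset ι) (i k : ℕ) (j : ℤ) : Set Ω :=
  {ω | bucketOccupied h p S i ω ∧ hatHMH q r (bucketMin h p S i ω) = ((k : ℤ), j)}

def bucketRhoEvent (h : ι → Ω → ℝ) (p q : ℕ) (S : Finset ι) (i k : ℕ) : Set Ω :=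
  {ω | bucketOccupied h p S i ω ∧ rhoHMH q (bucketMin h p S i ω) = k}

def cellHitEvent (h : ι → Ω → ℝ) (p r : ℕ) (S : Finset ι) (i k : ℕ) (j : ℤ) : Set Ω :=
  ⋃ s ∈ S, {ω | h s ω * 2 ^ p - i ∈ hmhCell r k j}

variable {h : ι → Ω → ℝ} {p q r i : ℕ}

lemma collisionEvent_subset (A B : Finset ι) :
    collisionEvent h p q r A B i ⊆
      ⋃ k ∈ Finset.Icc 1 (2 ^ q), ⋃ j : ℤ, bucketValueEvent h p q r A i k j ∩
        cellHitEvent h p r B i k j := by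
  rintro ω ⟨hA, hB, heq⟩
  obtain ⟨k, j, hkj⟩ : ∃ k j, hatHMH q r (bucketMin h p A i ω) = (k, j) := ⟨_, _, rfl⟩
  have hρ : rhoHMH q (bucketMin h p A i ω) = k := congrArg Prod.fst hkj
  have hk1 := hρ ▸ one_le_rhoHMH q (bucketMin_mem_Ioo hA).1 (bucketMin_mem_Ioo hA).2.le
  have hkq : k ≤ 2 ^ q := hρ ▸ min_le_right _ _
  lift k to ℕ using (by omega)
  obtain ⟨b, hb, -, hbeq⟩ := exists_bucketMin_eq hB
  simp only [Set.mem_iUnion]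
  refine ⟨k, Finset.mem_Icc.mpr ⟨by exact_mod_cast hk1, by exact_mod_cast hkq⟩, j,
    ⟨hA, hkj⟩, Set.mem_biUnion hb ?_⟩
  have hcell := mem_hmhCell_of_hatHMH_eq (heq ▸ hkj)
  rwa [hbeq] at hcell

variable [MeasurableSpace Ω] {μ : Measure Ω}

lemma measure_cellHitEvent_le {S : Finset ι} (hmeas : ∀ s ∈ S, Measurable (h s))
    (hunif : ∀ s ∈ S, μ.map (h s) = volume.restrict (Set.Icc 0 1)) (k : ℕ) (j : ℤ) :
    μ (cellHitEvent h p r S i k j) ≤ ENNReal.ofReal (S.card / 2 ^ (p + k + r)) := by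
  have hcell : ∀ s ∈ S, μ {ω | h s ω * 2 ^ p - i ∈ hmhCell r k j}
      ≤ ENNReal.ofReal (1 / 2 ^ (p + k + r)) := by
    intro s hs
    refine (measure_rescale_mem_le (T := hmhCell r k j) (hmeas s hs) (hunif s hs) p i
      measurableSet_Ico).trans_eq ?_
    rw [volume_hmhCell, ← ENNReal.ofReal_mul (by positivity), add_assoc, pow_add 2 p,
      one_div_mul_one_div]
  calc μ (cellHitEvent h p r S i k j)
      ≤ ∑ s ∈ S, μ {ω | h s ω * 2 ^ p - i ∈ hmhCell r k j} := measure_biUnion_finset_le _ _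
    _ ≤ S.card • ENNReal.ofReal (1 / 2 ^ (p + k + r)) := Finset.sum_le_card_nsmul _ _ _ hcell
    _ = ENNReal.ofReal (S.card / 2 ^ (p + k + r)) := by
        rw [nsmul_eq_mul, ← ENNReal.ofReal_natCast, ← ENNReal.ofReal_mul (by positivity),
          mul_one_div]

lemma tsum_measure_bucketValueEvent_le {S : Finset ι} (hmeas : ∀ s ∈ S, Measurable (h s))
    (k : ℕ) :
    ∑' j, μ (bucketValueEvent h p q r S i k j) ≤ μ (bucketRhoEvent h p q S i k) := by
  have hdisj : Pairwise (Function.onFun Disjoint (bucketValueEvent h p q r S i k)) :=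
    fun j j' hne => Set.disjoint_left.mpr fun ω hj hj' =>
      hne (congrArg Prod.snd (hj.2.symm.trans hj'.2))
  rw [← measure_iUnion hdisj fun j =>
    measurableSet_bucketOccupied_and_bucketMin_mem hmeas
      (measurable_hatHMH q r (measurableSet_singleton _))]
  exact measure_mono (Set.iUnion_subset fun j ω hω => ⟨hω.1, congrArg Prod.fst hω.2⟩)

lemma measure_bucketRhoEvent_le [IsProbabilityMeasure μ] {U S : Finset ι}
    (hindep : iIndepFun (fun s : ↥U => h s) μ) (hSU : S ⊆ U)
    (hmeas : ∀ s ∈ S, Measurable (h s))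
    (hunif : ∀ s ∈ S, μ.map (h s) = volume.restrict (Set.Icc 0 1)) (hi : i < 2 ^ p)
    {k : ℕ} (hk : k < 2 ^ q) :
    μ (bucketRhoEvent h p q S i k) ≤ ENNReal.ofReal ((1 - 1 / 2 ^ (p + k)) ^ S.card) := by
  set I : Set ℝ := (fun x => x * 2 ^ p - i) ⁻¹' Set.Ioo 0 (1 / 2 ^ k)
  have hI : MeasurableSet I := (measurable_id.mul_const _).sub_const _ measurableSet_Ioo
  have hsub : bucketRhoEvent h p q S i k ⊆ ⋂ s ∈ S, h s ⁻¹' Iᶜ := by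
    rintro ω ⟨hocc, hρ⟩
    simp only [Set.mem_iInter]
    intro s hs hsI
    have hlt := one_div_two_pow_lt_of_rhoHMH_eq (bucketMin_mem_Ioo hocc).1 hρ hk
    have hsi : h s ω ∈ bucketIoo p i :=
      mem_bucketIoo_iff.mpr ⟨hsI.1, hsI.2.trans_le (one_div_two_pow_le_one k)⟩
    exact lt_irrefl _ (((bucketMin_le hs hsi).trans_lt hsI.2).trans hlt)
  have hI01 : Set.Ioo (0 : ℝ) (1 / 2 ^ k) ⊆ Set.Icc 0 1 :=
    Set.Ioo_subset_Icc_self.trans (Set.Icc_subset_Icc le_rfl (one_div_two_pow_le_one k))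
  have hmiss : ∀ s ∈ S, μ (h s ⁻¹' Iᶜ) = ENNReal.ofReal (1 - 1 / 2 ^ (p + k)) := by
    intro s hs
    have hhit : μ (h s ⁻¹' I) = ENNReal.ofReal (1 / 2 ^ (p + k)) :=
      (measure_rescale_mem_eq (hmeas s hs) (hunif s hs) hi measurableSet_Ioo hI01).trans (by
        rw [Real.volume_Ioo, ← ENNReal.ofReal_mul (by positivity), sub_zero, pow_add,
          one_div_mul_one_div])
    rw [Set.preimage_compl, prob_compl_eq_one_sub (hmeas s hs hI), hhit,
      ENNReal.ofReal_sub _ (by positivity), ENNReal.ofReal_one]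
  calc μ (bucketRhoEvent h p q S i k) ≤ μ (⋂ s ∈ S, h s ⁻¹' Iᶜ) := measure_mono hsub
    _ = ∏ s ∈ S, μ (h s ⁻¹' Iᶜ) :=
        measure_biInter_preimage_eq_prod hindep hSU fun _ _ => hI.compl
    _ = ENNReal.ofReal (1 - 1 / 2 ^ (p + k)) ^ S.card := by
        rw [Finset.prod_congr rfl hmiss, Finset.prod_const]
    _ = _ := (ENNReal.ofReal_pow (sub_nonneg.mpr (one_div_two_pow_le_one _)) _).symm

lemma measure_collisionEvent_le {U A B : Finset ι} (hmeas : ∀ s ∈ U, Measurable (h s))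
    (hindep : iIndepFun (fun s : ↥U => h s) μ)
    (hunif : ∀ s ∈ B, μ.map (h s) = volume.restrict (Set.Icc 0 1))
    (hA : A ⊆ U) (hB : B ⊆ U) (hAB : Disjoint A B) :
    μ (collisionEvent h p q r A B i) ≤ ∑ k ∈ Finset.Icc 1 (2 ^ q),
      μ (bucketRhoEvent h p q A i k) * ENNReal.ofReal (B.card / 2 ^ (p + k + r)) := by
  have hindepAB := indep_iSup_comap_of_disjoint hmeas hindep hA hB hAB
  refine (measure_mono (collisionEvent_subset A B)).trans
    ((measure_biUnion_finset_le _ _).trans (Finset.sum_le_sum fun k _ => ?_))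
  calc μ (⋃ j : ℤ, bucketValueEvent h p q r A i k j ∩ cellHitEvent h p r B i k j)
      ≤ ∑' j, μ (bucketValueEvent h p q r A i k j ∩ cellHitEvent h p r B i k j) :=
        measure_iUnion_le _
    _ = ∑' j, μ (bucketValueEvent h p q r A i k j) * μ (cellHitEvent h p r B i k j) := by
        refine tsum_congr fun j => (Indep_iff _ _ μ).mp hindepAB _ _ ?_ ?_
        · exact measurableSet_bucketOccupied_and_bucketMin_mem
            (fun s hs => measurable_of_mem_iSup_comap hs)
            (measurable_hatHMH q r (measurableSet_singleton _))
        · exact Finset.measurableSet_biUnion B fun s hs =>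
            ((measurable_of_mem_iSup_comap hs).mul_const _).sub_const _ measurableSet_Ico
    _ ≤ ∑' j, μ (bucketValueEvent h p q r A i k j) * ENNReal.ofReal (B.card / 2 ^ (p + k + r)) :=
        ENNReal.tsum_le_tsum fun j => by
          gcongr
          exact measure_cellHitEvent_le (fun s hs => hmeas s (hB hs)) hunif k j
    _ ≤ _ := by
        rw [ENNReal.tsum_mul_right]
        gcongr
        exact tsum_measure_bucketValueEvent_le (fun s hs => hmeas s (hA hs)) k

end

end HyperMinHash

open HyperMinHash

theorem hyperminhash_bucket_collision_bound_general
    {Ω ι : Type*} [MeasurableSpace Ω] [DecidableEq ι]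
    (μ : Measure Ω) [IsProbabilityMeasure μ]
    (p q r : ℕ) (n m : ℕ)
    (A B : Finset ι) (hdisj : Disjoint A B)
    (hcardA : A.card = n) (hcardB : B.card = m)
    (hmn : m ≤ n)
    (h : ι → Ω → ℝ)
    (hmeas : ∀ s ∈ A ∪ B, Measurable (h s))
    (hindep : iIndepFun (fun s : ↥(A ∪ B) => h s) μ)
    (hunif : ∀ s ∈ A ∪ B, Measure.map (h s) μ = volume.restrict (Set.Icc (0 : ℝ) 1)) :
    ∀ i < 2 ^ p,
      (μ {ω | bucketOccupied h p A i ω ∧ bucketOccupied h p B i ω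
        ∧ hatHMH q r (bucketMin h p A i ω) = hatHMH q r (bucketMin h p B i ω)}).toReal
      ≤ 5 / 2 ^ r + (n : ℝ) / 2 ^ (p + 2 ^ q + r) := by
  intro i hi
  have hA : A ⊆ A ∪ B := Finset.subset_union_left
  have hB : B ⊆ A ∪ B := Finset.subset_union_right
  have hrho : ∀ k < 2 ^ q, μ.real (bucketRhoEvent h p q A i k) ≤ (1 - 1 / 2 ^ (p + k)) ^ n :=
    fun k hk => hcardA ▸ ENNReal.toReal_le_of_le_ofReal
      (pow_nonneg (sub_nonneg.mpr (one_div_two_pow_le_one _)) _)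
      (measure_bucketRhoEvent_le hindep hA (fun s hs => hmeas s (hA hs))
        (fun s hs => hunif s (hA hs)) hi hk)
  have hfin : ∀ k ∈ Finset.Icc 1 (2 ^ q),
      μ (bucketRhoEvent h p q A i k) * ENNReal.ofReal (m / 2 ^ (p + k + r)) ≠ ⊤ :=
    fun k _ => ENNReal.mul_ne_top (measure_ne_top _ _) ENNReal.ofReal_ne_top
  calc (μ (collisionEvent h p q r A B i)).toReal
      ≤ (∑ k ∈ Finset.Icc 1 (2 ^ q),
          μ (bucketRhoEvent h p q A i k) * ENNReal.ofReal (m / 2 ^ (p + k + r))).toReal :=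
        ENNReal.toReal_mono (ENNReal.sum_ne_top.mpr hfin) (hcardB ▸
          measure_collisionEvent_le hmeas hindep (fun s hs => hunif s (hB hs)) hA hB hdisj)
    _ = ∑ k ∈ Finset.Icc 1 (2 ^ q),
          μ.real (bucketRhoEvent h p q A i k) * (m / 2 ^ (p + k + r)) := by
        rw [ENNReal.toReal_sum hfin]
        refine Finset.sum_congr rfl fun k _ => ?_
        rw [ENNReal.toReal_mul, ENNReal.toReal_ofReal (by positivity), measureReal_def]
    _ ≤ 4 / 2 ^ r + (n : ℝ) / 2 ^ (p + 2 ^ q + r) :=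
        sum_Icc_mul_div_two_pow_le p q r hmn _ (fun k => measureReal_le_one) hrho
    _ ≤ 5 / 2 ^ r + (n : ℝ) / 2 ^ (p + 2 ^ q + r) := by gcongr; norm_num

/-- **Per-bucket collision bound for the full HyperMinHash sketch**
(key step of Theorem `thm:main`): for disjoint sets `A`, `B` with
`|A| = n ≥ 1`, `|B| = m ≥ 1`, `m ≤ n ≤ 2^{2^q + r}`, and independent uniform-`[0,1]`
hashes on `A ∪ B`, the probability that bucket `i` is occupied for both sets and the
HyperMinHash bucket values coincide is at most `5/2^r + n/2^{p + 2^q + r}`. -/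
theorem hyperminhash_bucket_collision_bound
    {Ω ι : Type*} [MeasurableSpace Ω] [DecidableEq ι]
    (μ : Measure Ω) [IsProbabilityMeasure μ]
    (p q r : ℕ) (n m : ℕ)
    (A B : Finset ι) (hdisj : Disjoint A B)
    (hcardA : A.card = n) (hcardB : B.card = m)
    (hm : 1 ≤ m) (hmn : m ≤ n) (hnb : n ≤ 2 ^ (2 ^ q + r))
    (h : ι → Ω → ℝ)
    (hmeas : ∀ s ∈ A ∪ B, Measurable (h s))
    (hindep : iIndepFun (fun s : ↥(A ∪ B) => h s) μ)
    (hunif : ∀ s ∈ A ∪ B, Measure.map (h s) μ = volume.restrict (Set.Icc (0 : ℝ) 1)) :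
    ∀ i < 2 ^ p,
      (μ {ω | bucketOccupied h p A i ω ∧ bucketOccupied h p B i ω
        ∧ hatHMH q r (bucketMin h p A i ω) = hatHMH q r (bucketMin h p B i ω)}).toReal
      ≤ 5 / 2 ^ r + (n : ℝ) / 2 ^ (p + 2 ^ q + r) :=
  hyperminhash_bucket_collision_bound_general μ p q r n m A B hdisj hcardA hcardB hmn h hmeas hindep
    hunif
end
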